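/- arXiv:2510.03108 — 5 statements merged into one kernel-verified Lean document; each statement's English description precedes it below -/
import Mathlib

section
/- For every integer m ≥ 3, the function φ_m(x) = log(1 − cos x) − 6·∑_{k=1}^∞ cos(kx)/(m²k³ − 4k) satisfies φ_m''(x) < 0 for all x ∈ (0,π). -/
open Finset Real

/-- For an integer `m ≥ 3`, `φ_m(x) = log(1 − cos x) − 6·∑_{k=1}^∞ cos(kx)/(m²k³ − 4k)`. -/
noncomputable def phi (m : ℕ) (x : ℝ) : ℝ :=
  Real.log (1 - Real.cos x) -
    6 * ∑' k : ℕ,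
      Real.cos (((k : ℝ) + 1) * x) /
        ((m : ℝ) ^ 2 * ((k : ℝ) + 1) ^ 3 - 4 * ((k : ℝ) + 1))

namespace PhiAux

noncomputable def ccc (m : ℕ) (k : ℕ) : ℝ :=
  (m : ℝ) ^ 2 * ((k : ℝ) + 1) ^ 3 - 4 * ((k : ℝ) + 1)

lemma ccc_ge (m : ℕ) (hm : 3 ≤ m) (k : ℕ) : 5 * ((k : ℝ) + 1) ^ 3 ≤ ccc m k := by
  have h3 : (3 : ℝ) ≤ (m : ℝ) := by exact_mod_cast hm
  have h9 : (9 : ℝ) ≤ (m : ℝ) ^ 2 := by nlinarith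
  have ht : (0 : ℝ) ≤ (k : ℝ) := Nat.cast_nonneg k
  have h1 : (1 : ℝ) ≤ (k : ℝ) + 1 := by linarith
  have h3' : ((k : ℝ) + 1) ≤ ((k : ℝ) + 1) ^ 3 := by nlinarith [sq_nonneg ((k:ℝ)+1), mul_nonneg ht ht]
  unfold ccc
  nlinarith [mul_nonneg (sub_nonneg.2 h9) (pow_nonneg (by linarith : (0:ℝ) ≤ (k:ℝ)+1) 3)]

lemma ccc_pos (m : ℕ) (hm : 3 ≤ m) (k : ℕ) : 0 < ccc m k := by
  have := ccc_ge m hm k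
  have : (0:ℝ) < 5 * ((k : ℝ) + 1) ^ 3 := by positivity
  linarith [ccc_ge m hm k]

noncomputable def Ak (m : ℕ) (k : ℕ) : ℝ := ((k : ℝ) + 1) ^ 2 / ccc m k

lemma Ak_nonneg (m : ℕ) (hm : 3 ≤ m) (k : ℕ) : 0 ≤ Ak m k :=
  div_nonneg (by positivity) (ccc_pos m hm k).le

lemma Ak_antitone (m : ℕ) (hm : 3 ≤ m) (k : ℕ) : Ak m (k + 1) ≤ Ak m k := by
  unfold Ak
  rw [div_le_div_iff₀ (ccc_pos m hm (k+1)) (ccc_pos m hm k)]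
  have ht : (0 : ℝ) ≤ (k : ℝ) := Nat.cast_nonneg k
  have hcast : ((k + 1 : ℕ) : ℝ) = (k : ℝ) + 1 := by push_cast; ring
  rw [hcast]
  unfold ccc
  rw [hcast]
  set t : ℝ := (k : ℝ)
  have key : ((t:ℝ) + 1) ^ 2 * ((m:ℝ)^2 * ((t + 1) + 1) ^ 3 - 4 * ((t+1) + 1)) -
      ((t + 1) + 1) ^ 2 * ((m:ℝ)^2 * (t + 1) ^ 3 - 4 * (t + 1)) =
      (m:ℝ)^2 * ((t+1)*(t+2))^2 + 4 * (t+1) * (t+2) := by ring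
  nlinarith [sq_nonneg ((t+1)*(t+2)), mul_nonneg (mul_nonneg (by norm_num : (0:ℝ) ≤ 4) (by linarith : (0:ℝ) ≤ t+1)) (by linarith : (0:ℝ) ≤ t+2), sq_nonneg ((m:ℝ)), mul_nonneg (sq_nonneg (m:ℝ)) (sq_nonneg ((t+1)*(t+2)))]

lemma Ak_le (m : ℕ) (hm : 3 ≤ m) (k : ℕ) : Ak m k ≤ 1 / (5 * ((k : ℝ) + 1)) := by
  unfold Ak
  rw [div_le_div_iff₀ (ccc_pos m hm k) (by positivity)]
  have := ccc_ge m hm k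
  nlinarith [this]

lemma Ak_mono_le (m : ℕ) (hm : 3 ≤ m) {i j : ℕ} (h : i ≤ j) : Ak m j ≤ Ak m i :=
  antitone_nat_of_succ_le (fun k => Ak_antitone m hm k) h


/-- Partial sums of `cos((k+1)y)`. -/
lemma cos_sum_eq (y : ℝ) (N : ℕ) :
    2 * Real.sin (y/2) * ∑ k ∈ range N, Real.cos (((k : ℝ) + 1) * y) =
      Real.sin (((N : ℝ) + 1/2) * y) - Real.sin (y/2) := by
  induction N with
  | zero => simp [show ((0:ℕ):ℝ) + 1/2 = 1/2 by norm_num]; ring_nf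
  | succ N ih =>
    rw [Finset.sum_range_succ, mul_add, ih]
    push_cast
    have e1 : ((N:ℝ) + 1 + 1/2) * y = (((N:ℝ)+1) * y) + y/2 := by ring
    have e2 : ((N:ℝ) + 1/2) * y = (((N:ℝ)+1) * y) - y/2 := by ring
    rw [e1, e2, Real.sin_add, Real.sin_sub]
    ring

lemma cos_sum_le {y : ℝ} (hs : 0 < Real.sin (y/2)) (N : ℕ) :
    ∑ k ∈ range N, Real.cos (((k : ℝ) + 1) * y) ≤ (1 - Real.sin (y/2)) / (2 * Real.sin (y/2)) := by
  rw [le_div_iff₀ (by positivity)]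
  have h := cos_sum_eq y N
  have h1 := Real.sin_le_one (((N : ℝ) + 1/2) * y)
  nlinarith [h, h1]

lemma cos_sum_abs_le {y : ℝ} (hs : 0 < Real.sin (y/2)) (N : ℕ) :
    |∑ k ∈ range N, Real.cos (((k : ℝ) + 1) * y)| ≤ 1 / Real.sin (y/2) := by
  rw [abs_le]
  constructor
  · rw [neg_le, le_div_iff₀ hs]
    have h := cos_sum_eq y N
    have h1 := Real.neg_one_le_sin (((N : ℝ) + 1/2) * y)
    have h2 := Real.sin_le_one (y/2)
    nlinarith
  · rw [le_div_iff₀ hs]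
    have h := cos_sum_eq y N
    have h1 := Real.sin_le_one (((N : ℝ) + 1/2) * y)
    have h2 : -1 ≤ Real.sin (y/2) := Real.neg_one_le_sin _
    nlinarith

/-- One-sided Abel summation estimate. -/
lemma abel_le (A c : ℕ → ℝ) (hA0 : ∀ k, 0 ≤ A k) (hAm : ∀ k, A (k+1) ≤ A k) {U : ℝ}
    (hU : 0 ≤ U) (hc : ∀ j, ∑ k ∈ range j, c k ≤ U) (N : ℕ) :
    ∑ k ∈ range N, A k * c k ≤ A 0 * U := by
  have key := Finset.sum_range_by_parts A c N
  simp only [smul_eq_mul] at key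
  rw [key]
  have mono : ∀ i j : ℕ, i ≤ j → A j ≤ A i := fun i j h =>
    antitone_nat_of_succ_le (fun k => hAm k) h
  have h1 : A (N-1) * (∑ k ∈ range N, c k) ≤ A (N-1) * U :=
    mul_le_mul_of_nonneg_left (hc N) (hA0 _)
  have h2 : ∑ i ∈ range (N-1), (A (i+1) - A i) * U ≤
      ∑ i ∈ range (N-1), (A (i+1) - A i) * (∑ j ∈ range (i+1), c j) := by
    apply Finset.sum_le_sum
    intro i _
    have hf : A (i+1) - A i ≤ 0 := by linarith [hAm i]
    nlinarith [hc (i+1)]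
  have h3 : ∑ i ∈ range (N-1), (A (i+1) - A i) * U = (A (N-1) - A 0) * U := by
    rw [← Finset.sum_mul, Finset.sum_range_sub (fun i => A i)]
  nlinarith [mono 0 (N-1) (Nat.zero_le _)]

/-- Two-sided Abel summation estimate. -/
lemma abel_abs (A c : ℕ → ℝ) (hA0 : ∀ k, 0 ≤ A k) (hAm : ∀ k, A (k+1) ≤ A k) {U : ℝ}
    (hU : 0 ≤ U) (hc : ∀ j, |∑ k ∈ range j, c k| ≤ U) (N : ℕ) :
    |∑ k ∈ range N, A k * c k| ≤ 2 * (A 0 * U) := by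
  have key := Finset.sum_range_by_parts A c N
  simp only [smul_eq_mul] at key
  rw [key]
  have mono : ∀ i j : ℕ, i ≤ j → A j ≤ A i := fun i j h =>
    antitone_nat_of_succ_le (fun k => hAm k) h
  have h1 : |A (N-1) * (∑ k ∈ range N, c k)| ≤ A 0 * U := by
    rw [abs_mul, abs_of_nonneg (hA0 _)]
    exact mul_le_mul (mono 0 (N-1) (Nat.zero_le _)) (hc N) (abs_nonneg _) (hA0 0)
  have h2 : |∑ i ∈ range (N-1), (A (i+1) - A i) * (∑ j ∈ range (i+1), c j)| ≤ A 0 * U := by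
    calc |∑ i ∈ range (N-1), (A (i+1) - A i) * (∑ j ∈ range (i+1), c j)|
        ≤ ∑ i ∈ range (N-1), |(A (i+1) - A i) * (∑ j ∈ range (i+1), c j)| :=
          Finset.abs_sum_le_sum_abs _ _
      _ ≤ ∑ i ∈ range (N-1), (A i - A (i+1)) * U := by
          apply Finset.sum_le_sum
          intro i _
          rw [abs_mul, abs_sub_comm, abs_of_nonneg (by linarith [hAm i] : 0 ≤ A i - A (i+1))]
          exact mul_le_mul_of_nonneg_left (hc (i+1)) (by linarith [hAm i])
      _ = (A 0 - A (N-1)) * U := by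
          rw [← Finset.sum_mul, Finset.sum_range_sub' (fun i => A i)]
      _ ≤ A 0 * U := by nlinarith [hA0 (N-1), mul_nonneg (hA0 (N-1)) hU]
  calc |A (N-1) * (∑ k ∈ range N, c k) -
      ∑ i ∈ range (N-1), (A (i+1) - A i) * (∑ j ∈ range (i+1), c j)| ≤
      |A (N-1) * (∑ k ∈ range N, c k)| +
      |∑ i ∈ range (N-1), (A (i+1) - A i) * (∑ j ∈ range (i+1), c j)| := abs_sub _ _
    _ ≤ 2 * (A 0 * U) := by linarith


noncomputable def QQ (m N : ℕ) (y : ℝ) : ℝ :=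
  ∑ k ∈ range N, Ak m k * Real.cos (((k : ℝ) + 1) * y)

lemma QQ_sub_abs (m : ℕ) (hm : 3 ≤ m) {y σ : ℝ} (hσ : 0 < σ) (hyσ : σ ≤ Real.sin (y/2))
    {N M : ℕ} (h : N ≤ M) :
    |QQ m M y - QQ m N y| ≤ 2 * (Ak m N * (2/σ)) := by
  have hs : 0 < Real.sin (y/2) := lt_of_lt_of_le hσ hyσ
  unfold QQ
  rw [← Finset.sum_Ico_eq_sub _ h, Finset.sum_Ico_eq_sum_range]
  have habs : ∀ j : ℕ, |∑ k ∈ range j, Real.cos (((k : ℝ) + 1) * y)| ≤ 1/σ := by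
    intro j
    refine (cos_sum_abs_le hs j).trans ?_
    exact one_div_le_one_div_of_le hσ hyσ
  have key := abel_abs (fun j => Ak m (N + j))
      (fun j => Real.cos ((((N + j : ℕ) : ℝ) + 1) * y))
      (fun j => Ak_nonneg m hm _)
      (fun j => Ak_antitone m hm (N + j))
      (by positivity : (0:ℝ) ≤ 2/σ)
      (fun J => by
        have e : ∑ j ∈ range J, Real.cos ((((N + j : ℕ) : ℝ) + 1) * y) =
            ∑ k ∈ Finset.Ico N (N + J), Real.cos (((k : ℝ) + 1) * y) := by
          rw [Finset.sum_Ico_eq_sum_range, Nat.add_sub_cancel_left]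
        rw [e, Finset.sum_Ico_eq_sub _ (Nat.le_add_right N J)]
        calc |∑ k ∈ range (N+J), Real.cos (((k : ℝ) + 1) * y) -
              ∑ k ∈ range N, Real.cos (((k : ℝ) + 1) * y)| ≤
            |∑ k ∈ range (N+J), Real.cos (((k : ℝ) + 1) * y)| +
            |∑ k ∈ range N, Real.cos (((k : ℝ) + 1) * y)| := abs_sub _ _
          _ ≤ 2/σ := by
              have := habs (N+J); have := habs N
              rw [show (2:ℝ)/σ = 1/σ + 1/σ by ring]
              linarith)
      (M - N)
  exact key


noncomputable def gg (m k : ℕ) (z : ℝ) : ℝ := Real.cos (((k : ℝ) + 1) * z) / ccc m k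

noncomputable def gg' (m k : ℕ) (z : ℝ) : ℝ :=
  -Real.sin (((k : ℝ) + 1) * z) * (((k : ℝ) + 1) * 1) / ccc m k

noncomputable def TT (m : ℕ) (y : ℝ) : ℝ :=
  ∑' k : ℕ, ((k : ℝ) + 1) * Real.sin (((k : ℝ) + 1) * y) / ccc m k

noncomputable def FF (m N : ℕ) (y : ℝ) : ℝ :=
  ∑ k ∈ range N, ((k : ℝ) + 1) * Real.sin (((k : ℝ) + 1) * y) / ccc m k

lemma summable_u : Summable (fun k : ℕ => 1 / (5 * ((k : ℝ) + 1) ^ 2)) := by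
  have h0 : Summable (fun n : ℕ => 1 / (n : ℝ) ^ 2) :=
    Real.summable_one_div_nat_pow.mpr Nat.one_lt_two
  have h1 : Summable (fun k : ℕ => 1 / ((k : ℝ) + 1) ^ 2) := by
    have := (summable_nat_add_iff (f := fun n : ℕ => 1 / (n : ℝ) ^ 2) 1).mpr h0
    simpa using this
  have h2 := h1.mul_left (1/5)
  refine h2.congr fun k => ?_
  rw [one_div_mul_one_div]

lemma div_ccc_le (m : ℕ) (hm : 3 ≤ m) (k : ℕ) :
    ((k : ℝ) + 1) / ccc m k ≤ 1 / (5 * ((k : ℝ) + 1) ^ 2) := by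
  rw [div_le_div_iff₀ (ccc_pos m hm k) (by positivity)]
  nlinarith [ccc_ge m hm k]

lemma gg'_bound (m : ℕ) (hm : 3 ≤ m) (k : ℕ) (z : ℝ) :
    ‖gg' m k z‖ ≤ 1 / (5 * ((k : ℝ) + 1) ^ 2) := by
  have hk1 : (0:ℝ) ≤ (k : ℝ) + 1 := by positivity
  have h1 : |(-Real.sin (((k : ℝ) + 1) * z) * (((k : ℝ) + 1) * 1))| ≤ (k : ℝ) + 1 := by
    rw [abs_mul, abs_neg, abs_of_nonneg (by linarith : (0:ℝ) ≤ ((k:ℝ)+1)*1)]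
    calc |Real.sin (((k : ℝ) + 1) * z)| * (((k:ℝ)+1)*1) ≤ 1 * (((k:ℝ)+1)*1) := by
          gcongr
          exact Real.abs_sin_le_one _
      _ = (k : ℝ) + 1 := by ring
  calc ‖gg' m k z‖ = |(-Real.sin (((k : ℝ) + 1) * z) * (((k : ℝ) + 1) * 1))| / ccc m k := by
        rw [Real.norm_eq_abs]; unfold gg'
        rw [abs_div, abs_of_pos (ccc_pos m hm k)]
    _ ≤ ((k : ℝ) + 1) / ccc m k := by gcongr; exact (ccc_pos m hm k).le
    _ ≤ 1 / (5 * ((k : ℝ) + 1) ^ 2) := div_ccc_le m hm k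

lemma gg_hasDeriv (m k : ℕ) (z : ℝ) : HasDerivAt (gg m k) (gg' m k z) z := by
  have h := (((hasDerivAt_id z).const_mul (((k:ℕ):ℝ)+1)).cos).div_const (ccc m k)
  exact h

lemma phi_eq (m : ℕ) :
    phi m = fun z => Real.log (1 - Real.cos z) - 6 * ∑' k : ℕ, gg m k z := rfl

lemma summable_gg (m : ℕ) (hm : 3 ≤ m) (z : ℝ) : Summable (fun k => gg m k z) := by
  apply Summable.of_abs
  apply summable_u.of_nonneg_of_le (fun k => abs_nonneg _)
  intro k
  have hk1 : (0:ℝ) < (k : ℝ) + 1 := by positivity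
  calc |gg m k z| = |Real.cos (((k : ℝ) + 1) * z)| / ccc m k := by
        unfold gg; rw [abs_div, abs_of_pos (ccc_pos m hm k)]
    _ ≤ ((k : ℝ) + 1) / ccc m k := by
        gcongr
        · exact (ccc_pos m hm k).le
        · calc |Real.cos (((k : ℝ) + 1) * z)| ≤ 1 := Real.abs_cos_le_one _
            _ ≤ (k : ℝ) + 1 := by linarith
    _ ≤ 1 / (5 * ((k : ℝ) + 1) ^ 2) := div_ccc_le m hm k

lemma summable_T (m : ℕ) (hm : 3 ≤ m) (y : ℝ) :
    Summable (fun k : ℕ => ((k : ℝ) + 1) * Real.sin (((k : ℝ) + 1) * y) / ccc m k) := by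
  apply Summable.of_abs
  apply summable_u.of_nonneg_of_le (fun k => abs_nonneg _)
  intro k
  have hk1 : (0:ℝ) ≤ (k : ℝ) + 1 := by positivity
  calc |((k : ℝ) + 1) * Real.sin (((k : ℝ) + 1) * y) / ccc m k|
      = (((k : ℝ) + 1) * |Real.sin (((k : ℝ) + 1) * y)|) / ccc m k := by
        rw [abs_div, abs_of_pos (ccc_pos m hm k), abs_mul, abs_of_nonneg hk1]
    _ ≤ (((k : ℝ) + 1) * 1) / ccc m k := by
        gcongr
        · exact (ccc_pos m hm k).le
        · exact Real.abs_sin_le_one _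
    _ = ((k : ℝ) + 1) / ccc m k := by ring
    _ ≤ 1 / (5 * ((k : ℝ) + 1) ^ 2) := div_ccc_le m hm k

lemma phi_hasDeriv (m : ℕ) (hm : 3 ≤ m) {y : ℝ} (hy : 0 < 1 - Real.cos y) :
    HasDerivAt (phi m) (Real.sin y / (1 - Real.cos y) + 6 * TT m y) y := by
  have hlog : HasDerivAt (fun z => Real.log (1 - Real.cos z))
      (Real.sin y / (1 - Real.cos y)) y := by
    have h1 : HasDerivAt (fun z => 1 - Real.cos z) (Real.sin y) y := by
      simpa using (Real.hasDerivAt_cos y).const_sub 1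
    exact h1.log (ne_of_gt hy)
  have hS : HasDerivAt (fun z => ∑' k : ℕ, gg m k z) (∑' k : ℕ, gg' m k y) y :=
    hasDerivAt_tsum summable_u (fun k z => gg_hasDeriv m k z)
      (fun k z => gg'_bound m hm k z) (summable_gg m hm 0) y
  have hcomb := hlog.sub (hS.const_mul 6)
  have ht : (∑' k : ℕ, gg' m k y) = -TT m y := by
    unfold TT
    rw [← tsum_neg]
    exact tsum_congr fun k => by unfold gg'; ring
  rw [ht] at hcomb
  rw [phi_eq m]
  exact hcomb.congr_deriv (by ring)

end PhiAux

open PhiAux Filter Topology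

set_option maxHeartbeats 2000000 in
/-- For every integer `m ≥ 3`, the function `φ_m` satisfies `φ_m''(x) < 0` for all
`x ∈ (0,π)`. -/
theorem phi_second_deriv_neg (m : ℕ) (hm : 3 ≤ m) (x : ℝ) (hx : x ∈ Set.Ioo 0 Real.pi) :
    deriv (deriv (phi m)) x < 0 := by
  obtain ⟨hx0, hxpi⟩ := hx
  have hpi := Real.pi_pos
  set s : ℝ := Real.sin (x/2) with hs_def
  have hs0 : 0 < s := Real.sin_pos_of_pos_of_lt_pi (by linarith) (by linarith)
  have hs1 : s ≤ 1 := Real.sin_le_one _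
  set σ : ℝ := Real.sin (x/4) with hσ_def
  have hσ0 : 0 < σ := Real.sin_pos_of_pos_of_lt_pi (by linarith) (by linarith)
  set I : Set ℝ := Set.Ioo (x/2) Real.pi with hI
  have hIopen : IsOpen I := isOpen_Ioo
  have hxI : x ∈ I := ⟨by linarith, hxpi⟩
  have hsin_lower : ∀ y ∈ I, σ ≤ Real.sin (y/2) := by
    intro y hy
    obtain ⟨hy1, hy2⟩ := hy
    have h1 : x/4 < y/2 := by linarith
    have h2 := Real.sin_lt_sin_of_lt_of_le_pi_div_two
      (by linarith : -(Real.pi/2) ≤ x/4) (by linarith : y/2 ≤ Real.pi/2) h1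
    linarith
  have hsiny : ∀ y ∈ I, 0 < Real.sin (y/2) := fun y hy =>
    lt_of_lt_of_le hσ0 (hsin_lower y hy)
  have cos_id : ∀ y : ℝ, Real.cos y = 1 - 2 * Real.sin (y/2)^2 := by
    intro y
    have h1 : Real.cos y = Real.cos (2 * (y/2)) := by congr 1; ring
    rw [h1, Real.cos_two_mul]
    have h2 := Real.sin_sq_add_cos_sq (y/2)
    linarith
  have one_sub_cos_pos : ∀ y ∈ I, 0 < 1 - Real.cos y := by
    intro y hy
    have h := hsiny y hy
    rw [cos_id y]
    nlinarith
  -- second derivative pieces at x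
  have h1c : 1 - Real.cos x = 2 * s^2 := by rw [cos_id x]; ring
  -- derivative of the rational part
  have hrat : HasDerivAt (fun y => Real.sin y / (1 - Real.cos y))
      (-(1 / (1 - Real.cos x))) x := by
    have h1 : HasDerivAt Real.sin (Real.cos x) x := Real.hasDerivAt_sin x
    have h2 : HasDerivAt (fun z => 1 - Real.cos z) (Real.sin x) x := by
      simpa using (Real.hasDerivAt_cos x).const_sub 1
    have hne : 1 - Real.cos x ≠ 0 := ne_of_gt (by rw [h1c]; positivity)
    have h := h1.div h2 hne
    refine h.congr_deriv ?_
    have hpy := Real.sin_sq_add_cos_sq x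
    have hpos : (0:ℝ) < 1 - Real.cos x := by rw [h1c]; positivity
    field_simp
    nlinarith
  -- uniform Cauchy machinery for QQ
  have bound_small : ∀ ε > (0:ℝ), ∃ N₀ : ℕ, ∀ N, N₀ ≤ N → 2 * (Ak m N * (2/σ)) < ε := by
    intro ε hε
    obtain ⟨N₀, hN₀⟩ := exists_nat_gt (4 / (5 * σ * ε))
    refine ⟨N₀, fun N hN => ?_⟩
    have h1 : Ak m N ≤ 1 / (5 * ((N:ℝ) + 1)) := Ak_le m hm N
    have h2 : (N₀ : ℝ) ≤ (N : ℝ) := by exact_mod_cast hN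
    have hσε : (0:ℝ) < 5 * σ * ε := by positivity
    have h3 : 4 / (5 * σ * ε) < (N : ℝ) + 1 := by linarith
    have h4 : 4 < ((N : ℝ) + 1) * (5 * σ * ε) := (div_lt_iff₀ hσε).mp h3
    have h5 : 2 * (Ak m N * (2/σ)) ≤ (4/σ) * (1 / (5 * ((N:ℝ) + 1))) := by
      have e : 2 * (Ak m N * (2/σ)) = (4/σ) * Ak m N := by ring
      rw [e]
      gcongr
    have h6 : (4/σ) * (1 / (5 * ((N:ℝ) + 1))) < ε := by
      rw [show (4/σ) * (1 / (5 * ((N:ℝ) + 1))) = 4 / (σ * (5 * ((N:ℝ)+1))) by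
          rw [div_mul_div_comm, mul_one],
        div_lt_iff₀ (by positivity)]
      nlinarith
    linarith
  have key : ∀ ε > (0:ℝ), ∃ N₀ : ℕ, ∀ M N : ℕ, N₀ ≤ M → N₀ ≤ N → ∀ y ∈ I,
      dist (QQ m M y) (QQ m N y) < ε := by
    intro ε hε
    obtain ⟨N₀, hN₀⟩ := bound_small ε hε
    refine ⟨N₀, fun M N hM hN y hy => ?_⟩
    rcases le_total N M with h | h
    · rw [Real.dist_eq]
      calc |QQ m M y - QQ m N y| ≤ 2 * (Ak m N * (2/σ)) :=
            QQ_sub_abs m hm hσ0 (hsin_lower y hy) h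
        _ < ε := hN₀ N hN
    · rw [Real.dist_eq, abs_sub_comm]
      calc |QQ m N y - QQ m M y| ≤ 2 * (Ak m M * (2/σ)) :=
            QQ_sub_abs m hm hσ0 (hsin_lower y hy) h
        _ < ε := hN₀ M hM
  have hUC : UniformCauchySeqOn (fun N y => QQ m N y) atTop I := by
    rw [Metric.uniformCauchySeqOn_iff]
    intro ε hε
    obtain ⟨N₀, hN₀⟩ := key ε hε
    exact ⟨N₀, fun M hM N hN y hy => hN₀ M N hM hN y hy⟩
  have hQc : ∀ y ∈ I, CauchySeq (fun N => QQ m N y) := by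
    intro y hy
    rw [Metric.cauchySeq_iff]
    intro ε hε
    obtain ⟨N₀, hN₀⟩ := key ε hε
    exact ⟨N₀, fun M hM N hN => hN₀ M N hM hN y hy⟩
  set D : ℝ → ℝ := fun y => limUnder atTop (fun N => QQ m N y) with hD_def
  have hQT : ∀ y ∈ I, Tendsto (fun N => QQ m N y) atTop (𝓝 (D y)) := fun y hy =>
    (hQc y hy).tendsto_limUnder
  have hTU : TendstoUniformlyOn (fun N y => QQ m N y) D atTop I :=
    hUC.tendstoUniformlyOn_of_tendsto hQT
  -- derivatives of partial sums
  have hFQ : ∀ N : ℕ, ∀ y : ℝ, HasDerivAt (FF m N) (QQ m N y) y := by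
    intro N y
    unfold FF QQ
    refine HasDerivAt.fun_sum fun k _ => ?_
    have h := (((hasDerivAt_id y).const_mul (((k:ℕ):ℝ)+1)).sin.const_mul
      (((k:ℕ):ℝ)+1)).div_const (ccc m k)
    simp only [id_eq] at h
    refine h.congr_deriv ?_
    unfold Ak
    ring
  have hFT : ∀ y : ℝ, Tendsto (fun N => FF m N y) atTop (𝓝 (TT m y)) := fun y =>
    (summable_T m hm y).hasSum.tendsto_sum_nat
  have hTd : HasDerivAt (TT m) (D x) x :=
    hasDerivAt_of_tendstoUniformlyOn hIopen hTU
      (Filter.Eventually.of_forall fun N y _ => hFQ N y) (fun y _ => hFT y) hxI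
  -- ψ and its derivative
  set ψ : ℝ → ℝ := fun y => Real.sin y / (1 - Real.cos y) + 6 * TT m y with hψ_def
  have hψ : HasDerivAt ψ (-(1 / (1 - Real.cos x)) + 6 * D x) x := hrat.add (hTd.const_mul 6)
  -- identify deriv (phi m) with ψ near x
  have hev : deriv (phi m) =ᶠ[nhds x] ψ := by
    filter_upwards [hIopen.mem_nhds hxI] with y hy
    exact (phi_hasDeriv m hm (one_sub_cos_pos y hy)).deriv
  rw [hev.deriv_eq, hψ.deriv]
  -- final estimate
  have hU0 : (0:ℝ) ≤ (1 - s) / (2 * s) := div_nonneg (by linarith) (by positivity)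
  have hQb : ∀ N, QQ m N x ≤ Ak m 0 * ((1 - s) / (2 * s)) := by
    intro N
    exact abel_le (Ak m) (fun k => Real.cos (((k:ℝ)+1)*x)) (Ak_nonneg m hm)
      (Ak_antitone m hm) hU0 (fun j => cos_sum_le hs0 j) N
  have hDx : D x ≤ Ak m 0 * ((1 - s) / (2 * s)) :=
    le_of_tendsto (hQT x hxI) (Filter.Eventually.of_forall hQb)
  have hm3 : (3:ℝ) ≤ (m:ℝ) := by exact_mod_cast hm
  have hm4 : (5:ℝ) ≤ (m:ℝ)^2 - 4 := by nlinarith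
  have hA0 : Ak m 0 = 1 / ((m:ℝ)^2 - 4) := by
    unfold Ak ccc
    norm_num
  have hA0le : Ak m 0 ≤ 1/5 := by
    rw [hA0, div_le_div_iff₀ (by linarith) (by norm_num)]
    linarith
  have hkey : 6 * (Ak m 0 * ((1 - s) / (2 * s))) < 1 / (2 * s^2) := by
    have e1 : 6 * (Ak m 0 * ((1 - s) / (2 * s))) ≤ 6 * ((1/5) * ((1 - s) / (2 * s))) := by
      gcongr
    have e2 : 6 * ((1/5) * ((1 - s) / (2 * s))) < 1 / (2 * s^2) := by
      rw [show 6 * ((1/5) * ((1 - s) / (2 * s))) = (6 * (1 - s)) / (5 * (2 * s)) by ring,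
        div_lt_div_iff₀ (by positivity) (by positivity)]
      have hq : s - s^2 ≤ 1/4 := by nlinarith [sq_nonneg (2*s - 1)]
      nlinarith [mul_le_mul_of_nonneg_left hq (by positivity : (0:ℝ) ≤ 12 * s)]
    linarith
  rw [h1c]
  have h6D : 6 * D x ≤ 6 * (Ak m 0 * ((1 - s) / (2 * s))) := by linarith
  linarith
end

section
/- For every integer m ≥ 3, the function φ_m(x) = log(1 − cos x) − 6·∑_{k=1}^∞ cos(kx)/(m²k³ − 4k) satisfies φ_m'(x) > 0 for all x ∈ (0,π); that is, φ_m is strictly increasing on (0,π). -/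
set_option maxHeartbeats 1000000

open Real

private lemma my_sin_add_sin (x y : ℝ) :
    Real.sin x + Real.sin y = 2 * Real.sin ((x + y) / 2) * Real.cos ((x - y) / 2) := by
  have h := Real.sin_sub_sin x (-y)
  rw [Real.sin_neg, sub_neg_eq_add, show x - -y = x + y by ring,
    show x + -y = x - y by ring] at h
  exact h

private lemma abs_sin_nat_mul_le (θ : ℝ) : ∀ n : ℕ, |Real.sin (n * θ)| ≤ n * |Real.sin θ| := by
  intro n
  induction n with
  | zero => simp
  | succ n ih =>
    have h1 : ((n + 1 : ℕ) : ℝ) * θ = (n : ℝ) * θ + θ := by push_cast; ring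
    rw [h1, Real.sin_add]
    calc |Real.sin ((n:ℝ) * θ) * Real.cos θ + Real.cos ((n:ℝ) * θ) * Real.sin θ|
        ≤ |Real.sin ((n:ℝ) * θ) * Real.cos θ| + |Real.cos ((n:ℝ) * θ) * Real.sin θ| := abs_add_le _ _
      _ = |Real.sin ((n:ℝ) * θ)| * |Real.cos θ| + |Real.cos ((n:ℝ) * θ)| * |Real.sin θ| := by
          rw [abs_mul, abs_mul]
      _ ≤ (n : ℝ) * |Real.sin θ| * 1 + 1 * |Real.sin θ| := by
          have h2 := Real.abs_cos_le_one θ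
          have h3 := Real.abs_cos_le_one ((n:ℝ) * θ)
          have h4 : (0:ℝ) ≤ |Real.sin ((n:ℝ)*θ)| := abs_nonneg _
          have h5 : (0:ℝ) ≤ |Real.sin θ| := abs_nonneg _
          have h6 : (0:ℝ) ≤ (n:ℝ) := Nat.cast_nonneg n
          nlinarith [ih]
      _ = ((n + 1 : ℕ) : ℝ) * |Real.sin θ| := by push_cast; ring

/-- coefficient `e M k = 1/(M (k+1)² − 4)`, the coefficient of `sin((k+1)x)`. -/
noncomputable def ee (M : ℝ) (k : ℕ) : ℝ := (M * ((k:ℝ)+1)^2 - 4)⁻¹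

private lemma ee_den_pos {M : ℝ} (hM : 9 ≤ M) (k : ℕ) : 0 < M * ((k:ℝ)+1)^2 - 4 := by
  have hk : (0:ℝ) ≤ (k:ℝ) := Nat.cast_nonneg k
  nlinarith [sq_nonneg ((k:ℝ))]

private lemma ee_pos {M : ℝ} (hM : 9 ≤ M) (k : ℕ) : 0 < ee M k :=
  inv_pos.mpr (ee_den_pos hM k)

private lemma ee_le {M : ℝ} (hM : 9 ≤ M) (k : ℕ) : ee M k ≤ 1/(5*((k:ℝ)+1)^2) := by
  have hk : (0:ℝ) ≤ (k:ℝ) := Nat.cast_nonneg k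
  rw [ee, one_div]
  apply inv_anti₀
  · positivity
  · nlinarith [sq_nonneg ((k:ℝ))]

private lemma summable_inv_sq_shift : Summable (fun k : ℕ => 1/(((k:ℝ)+1)^2)) := by
  have h := (summable_nat_add_iff (f := fun n : ℕ => 1/(n:ℝ)^2) 1).mpr
    (summable_one_div_nat_pow.mpr one_lt_two)
  refine h.congr fun k => ?_
  push_cast
  ring

private lemma summable_ee {M : ℝ} (hM : 9 ≤ M) : Summable (ee M) := by
  refine Summable.of_nonneg_of_le (fun k => (ee_pos hM k).le) (ee_le hM) ?_
  refine (summable_inv_sq_shift.mul_left (1/5)).congr fun k => ?_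
  rw [one_div, one_div, one_div, mul_inv]

private lemma b1 {M : ℝ} (hM : 9 ≤ M) (n : ℕ) :
    ee M (2*n+3) ≤ (9/35) * (1/M) * (1/(((n:ℝ)+2)^2)) := by
  have hn : (0:ℝ) ≤ (n:ℝ) := Nat.cast_nonneg n
  have hMpos : (0:ℝ) < M := by linarith
  have e3 : ee M (2*n+3) = (M*(2*(n:ℝ)+4)^2 - 4)⁻¹ := by
    unfold ee; congr 2; push_cast; ring
  rw [e3]
  have h1 : (35/9) * M * ((n:ℝ)+2)^2 ≤ M*(2*(n:ℝ)+4)^2 - 4 := by nlinarith [sq_nonneg ((n:ℝ)+2)]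
  have h2 : (0:ℝ) < (35/9) * M * ((n:ℝ)+2)^2 := by positivity
  have := inv_anti₀ h2 h1
  refine this.trans_eq ?_
  rw [show (35/9) * M * ((n:ℝ)+2)^2 = ((35:ℝ)/9) * (M * ((n:ℝ)+2)^2) by ring,
    mul_inv, mul_inv]
  norm_num
  ring

private lemma b2 {M : ℝ} (hM : 9 ≤ M) (n : ℕ) : 0 ≤ ee M (2*n+2) - ee M (2*n+3) := by
  have hn : (0:ℝ) ≤ (n:ℝ) := Nat.cast_nonneg n
  have e2 : ee M (2*n+2) = (M*(2*(n:ℝ)+3)^2 - 4)⁻¹ := by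
    unfold ee; congr 2; push_cast; ring
  have e3 : ee M (2*n+3) = (M*(2*(n:ℝ)+4)^2 - 4)⁻¹ := by
    unfold ee; congr 2; push_cast; ring
  rw [e2, e3, sub_nonneg]
  apply inv_anti₀
  · nlinarith
  · nlinarith

private lemma b3 {M : ℝ} (hM : 9 ≤ M) (n : ℕ) :
    (2*(n:ℝ)+3) * (ee M (2*n+2) - ee M (2*n+3)) ≤ (1701/2695) * (1/M) * (1/(((n:ℝ)+2)^2)) := by
  have hn : (0:ℝ) ≤ (n:ℝ) := Nat.cast_nonneg n
  have hMpos : (0:ℝ) < M := by linarith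
  have e2 : ee M (2*n+2) = (M*(2*(n:ℝ)+3)^2 - 4)⁻¹ := by
    unfold ee; congr 2; push_cast; ring
  have e3 : ee M (2*n+3) = (M*(2*(n:ℝ)+4)^2 - 4)⁻¹ := by
    unfold ee; congr 2; push_cast; ring
  have hP : (0:ℝ) < M*(2*(n:ℝ)+3)^2 - 4 := by nlinarith
  have hQ : (0:ℝ) < M*(2*(n:ℝ)+4)^2 - 4 := by nlinarith
  rw [e2, e3, inv_sub_inv hP.ne' hQ.ne']
  rw [show (1701:ℝ)/2695 * (1/M) * (1/(((n:ℝ)+2)^2)) = 1701 / (2695 * M * ((n:ℝ)+2)^2) by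
    field_simp]
  rw [mul_div_assoc'] 
  rw [div_le_div_iff₀ (by positivity) (by positivity)]
  have h9 : (9:ℝ) ≤ (2*(n:ℝ)+3)^2 := by nlinarith
  have h4 : (4:ℝ) ≤ ((n:ℝ)+2)^2 := by nlinarith
  have hP' : (77/81)*(M*(2*(n:ℝ)+3)^2) ≤ M*(2*(n:ℝ)+3)^2 - 4 := by nlinarith [mul_le_mul hM h9 (by norm_num) (by linarith)]
  have hQ' : (35/36)*(4*M*((n:ℝ)+2)^2) ≤ M*(2*(n:ℝ)+4)^2 - 4 := by nlinarith [mul_le_mul hM h4 (by norm_num) (by linarith)]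
  have hPQ : (77/81)*(M*(2*(n:ℝ)+3)^2) * ((35/36)*(4*M*((n:ℝ)+2)^2)) ≤
      (M*(2*(n:ℝ)+3)^2 - 4) * (M*(2*(n:ℝ)+4)^2 - 4) :=
    mul_le_mul hP' hQ' (by positivity) hP.le
  have hnn : (0:ℝ) ≤ M*M*((n:ℝ)+2)^2*(2*(n:ℝ)+3)*(n:ℝ) := by positivity
  nlinarith [hPQ, hnn]

private lemma sigma_le : ∑' n : ℕ, 1/(((n:ℝ)+2)^2) ≤ 3/4 := by
  have hs := hasSum_zeta_two
  have hsum : Summable (fun n : ℕ => (1:ℝ)/(n:ℝ)^2) := hs.summable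
  have key := Summable.sum_add_tsum_nat_add (f := fun n : ℕ => (1:ℝ)/(n:ℝ)^2) 2 hsum
  rw [hs.tsum_eq] at key
  have h01 : ∑ i ∈ Finset.range 2, (1:ℝ)/(i:ℝ)^2 = 1 := by
    rw [Finset.sum_range_succ, Finset.sum_range_succ]
    norm_num
  rw [h01] at key
  have hcongr : (∑' i : ℕ, (1:ℝ)/((i+2:ℕ):ℝ)^2) = ∑' n : ℕ, 1/(((n:ℝ)+2)^2) := by
    refine tsum_congr fun i => ?_
    push_cast
    ring
  rw [hcongr] at key
  have hpi : π < 3.15 := pi_lt_d2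
  have hpi0 : 0 < π := pi_pos
  nlinarith [key]


private lemma hasDerivAt_phi (m : ℕ) (hm : 3 ≤ m) (x : ℝ) (hx : x ∈ Set.Ioo 0 Real.pi) :
    HasDerivAt (phi m)
      (Real.sin x / (1 - Real.cos x) +
        6 * ∑' k : ℕ, Real.sin (((k:ℝ)+1) * x) * ee ((m:ℝ)^2) k) x := by
  obtain ⟨hx0, hxpi⟩ := hx
  have hm3 : (3:ℝ) ≤ (m:ℝ) := by exact_mod_cast hm
  have hM : (9:ℝ) ≤ (m:ℝ)^2 := by nlinarith
  set M : ℝ := (m:ℝ)^2 with hMdef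
  -- the series and its term derivatives
  set G : ℕ → ℝ → ℝ := fun k y => Real.cos (((k:ℝ)+1) * y) / (M * ((k:ℝ)+1)^3 - 4*((k:ℝ)+1))
    with hG
  set G' : ℕ → ℝ → ℝ := fun k y =>
      -(((k:ℝ)+1) * Real.sin (((k:ℝ)+1) * y)) / (M * ((k:ℝ)+1)^3 - 4*((k:ℝ)+1)) with hG'
  have hk1 : ∀ k : ℕ, (0:ℝ) < (k:ℝ)+1 := fun k => by positivity
  have hden : ∀ k : ℕ, M * ((k:ℝ)+1)^3 - 4*((k:ℝ)+1) = ((k:ℝ)+1) * (M * ((k:ℝ)+1)^2 - 4) :=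
    fun k => by ring
  have hdenpos : ∀ k : ℕ, 0 < M * ((k:ℝ)+1)^3 - 4*((k:ℝ)+1) := fun k => by
    rw [hden k]; exact mul_pos (hk1 k) (ee_den_pos hM k)
  have hdG : ∀ (k : ℕ) (y : ℝ), HasDerivAt (G k) (G' k y) y := by
    intro k y
    have h1 : HasDerivAt (fun y : ℝ => ((k:ℝ)+1) * y) ((k:ℝ)+1) y := by
      simpa using (hasDerivAt_id y).const_mul ((k:ℝ)+1)
    have h2 := ((Real.hasDerivAt_cos (((k:ℝ)+1) * y)).comp y h1).div_const
      (M * ((k:ℝ)+1)^3 - 4*((k:ℝ)+1))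
    refine h2.congr_deriv ?_
    simp [hG']
    ring
  have hbound : ∀ (k : ℕ) (y : ℝ), ‖G' k y‖ ≤ ee M k := by
    intro k y
    have hsin := Real.abs_sin_le_one (((k:ℝ)+1) * y)
    have h1 : ‖G' k y‖ = (((k:ℝ)+1) * |Real.sin (((k:ℝ)+1) * y)|) /
        (M * ((k:ℝ)+1)^3 - 4*((k:ℝ)+1)) := by
      rw [hG']
      rw [Real.norm_eq_abs, abs_div, abs_neg, abs_mul, abs_of_pos (hk1 k),
        abs_of_pos (hdenpos k)]
    rw [h1]
    have h2 : (((k:ℝ)+1) * |Real.sin (((k:ℝ)+1) * y)|) ≤ ((k:ℝ)+1) * 1 :=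
      mul_le_mul_of_nonneg_left hsin (hk1 k).le
    calc (((k:ℝ)+1) * |Real.sin (((k:ℝ)+1) * y)|) / (M * ((k:ℝ)+1)^3 - 4*((k:ℝ)+1))
        ≤ (((k:ℝ)+1) * 1) / (M * ((k:ℝ)+1)^3 - 4*((k:ℝ)+1)) := by
          gcongr
          exact (hdenpos k).le
      _ = ee M k := by
          rw [mul_one, hden k, ee]
          rw [eq_comm, inv_eq_iff_eq_inv, eq_comm, inv_div]
          rw [div_eq_iff (hk1 k).ne']
          ring
  -- summability at the point x
  have hsum0 : Summable (fun k => G k x) := by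
    refine Summable.of_norm_bounded (summable_ee hM) fun k => ?_
    have h1 : ‖G k x‖ ≤ 1 / (M * ((k:ℝ)+1)^3 - 4*((k:ℝ)+1)) := by
      rw [hG, Real.norm_eq_abs, abs_div, abs_of_pos (hdenpos k)]
      gcongr
      · exact (hdenpos k).le
      · exact Real.abs_cos_le_one _
    refine h1.trans ?_
    rw [hden k, ee, one_div, mul_inv]
    have h2 : (((k:ℝ)+1))⁻¹ ≤ 1 := by
      rw [inv_le_one_iff₀]; right; linarith [hk1 k, (Nat.cast_nonneg k : (0:ℝ) ≤ k)]
    have h3 : (0:ℝ) < (M * ((k:ℝ)+1)^2 - 4)⁻¹ := inv_pos.mpr (ee_den_pos hM k)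
    nlinarith [inv_pos.mpr (hk1 k)]
  -- derivative of the series
  have hT : HasDerivAt (fun y => ∑' k, G k y) (∑' k, G' k x) x :=
    hasDerivAt_tsum (summable_ee hM) hdG hbound hsum0 x
  -- derivative of the log part
  have hcoslt : Real.cos x < 1 := by
    have := Real.cos_lt_cos_of_nonneg_of_le_pi (le_refl 0) hxpi.le hx0
    simpa using this
  have hne : 1 - Real.cos x ≠ 0 := by linarith
  have hlog : HasDerivAt (fun y => Real.log (1 - Real.cos y)) (Real.sin x / (1 - Real.cos x)) x := by
    have h1 : HasDerivAt (fun y : ℝ => 1 - Real.cos y) (Real.sin x) x := by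
      simpa using (Real.hasDerivAt_cos x).const_sub 1
    exact h1.log hne
  -- assemble
  have hphi : phi m = fun y => Real.log (1 - Real.cos y) - 6 * ∑' k, G k y := by
    funext y
    simp only [phi, hG, hMdef]
  rw [hphi]
  have hmain := hlog.sub ((hT.const_mul 6))
  refine hmain.congr_deriv ?_
  -- identify the sums
  have hGg : ∑' k, G' k x = -∑' k : ℕ, Real.sin (((k:ℝ)+1) * x) * ee M k := by
    rw [← tsum_neg]
    refine tsum_congr fun k => ?_
    show -(((k:ℝ)+1) * Real.sin (((k:ℝ)+1) * x)) / (M * ((k:ℝ)+1)^3 - 4*((k:ℝ)+1)) =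
      -(Real.sin (((k:ℝ)+1) * x) * (M * ((k:ℝ)+1)^2 - 4)⁻¹)
    rw [hden k]
    rw [div_eq_iff (mul_pos (hk1 k) (ee_den_pos hM k)).ne']
    have hD : (M * ((k:ℝ)+1)^2 - 4)⁻¹ * (M * ((k:ℝ)+1)^2 - 4) = 1 := inv_mul_cancel₀ (ee_den_pos hM k).ne'
    linear_combination (((k:ℝ)+1) * Real.sin (((k:ℝ)+1) * x)) * hD
  rw [hGg, mul_neg, sub_neg_eq_add]

private lemma deriv_expr_pos {M : ℝ} (hM : 9 ≤ M) (x : ℝ) (hx0 : 0 < x) (hxpi : x < π) :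
    0 < Real.sin x / (1 - Real.cos x) +
      6 * ∑' k : ℕ, Real.sin (((k:ℝ)+1) * x) * ee M k := by
  have hsx : 0 < Real.sin (x/2) := sin_pos_of_pos_of_lt_pi (by linarith) (by linarith [pi_pos])
  have hcx : 0 < Real.cos (x/2) :=
    cos_pos_of_mem_Ioo ⟨by linarith [pi_pos], by linarith⟩
  have hpyth := sin_sq_add_cos_sq (x/2)
  have hs1 : Real.sin (x/2) < 1 := by nlinarith
  have hsinx : Real.sin x = 2 * Real.sin (x/2) * Real.cos (x/2) := by
    rw [show x = 2*(x/2) by ring, Real.sin_two_mul]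
    ring_nf
  have hcos1 : 1 - Real.cos x = 2 * Real.sin (x/2)^2 := by
    have h2m := Real.cos_two_mul (x/2)
    rw [show 2*(x/2) = x by ring] at h2m
    nlinarith
  have hsinxpos : 0 < Real.sin x := sin_pos_of_pos_of_lt_pi hx0 hxpi
  obtain ⟨g, hgdef⟩ : ∃ g : ℕ → ℝ, g = fun k : ℕ => Real.sin (((k:ℝ)+1) * x) * ee M k := ⟨_, rfl⟩
  rw [show (fun k : ℕ => Real.sin (((k:ℝ)+1) * x) * ee M k) = g from hgdef.symm]
  -- summability of even/odd parts
  have hb : ∀ k : ℕ, ‖g k‖ ≤ ee M k := by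
    intro k
    simp only [hgdef]
    simp only [Real.norm_eq_abs, abs_mul, abs_of_pos (ee_pos hM k)]
    nlinarith [Real.abs_sin_le_one (((k:ℝ)+1)*x), ee_pos hM k, abs_nonneg (Real.sin (((k:ℝ)+1)*x))]
  have hge : Summable (fun n : ℕ => g (2*n)) := by
    refine Summable.of_norm_bounded ((summable_inv_sq_shift.mul_left (1/5))) fun n => ?_
    refine (hb (2*n)).trans ((ee_le hM (2*n)).trans ?_)
    have hn : (0:ℝ) ≤ (n:ℝ) := Nat.cast_nonneg n
    rw [show (1:ℝ)/5 * (1/(((n:ℝ)+1)^2)) = 1/(5*((n:ℝ)+1)^2) by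
      rw [div_mul_div_comm, one_mul]]
    apply one_div_le_one_div_of_le (by positivity)
    push_cast
    nlinarith
  have hgo : Summable (fun n : ℕ => g (2*n+1)) := by
    refine Summable.of_norm_bounded ((summable_inv_sq_shift.mul_left (1/5))) fun n => ?_
    refine (hb (2*n+1)).trans ((ee_le hM (2*n+1)).trans ?_)
    have hn : (0:ℝ) ≤ (n:ℝ) := Nat.cast_nonneg n
    rw [show (1:ℝ)/5 * (1/(((n:ℝ)+1)^2)) = 1/(5*((n:ℝ)+1)^2) by
      rw [div_mul_div_comm, one_mul]]
    apply one_div_le_one_div_of_le (by positivity)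
    push_cast
    nlinarith
  have hpair : ∑' k, g k = ∑' n : ℕ, (g (2*n) + g (2*n+1)) := by
    rw [Summable.tsum_add hge hgo, tsum_even_add_odd hge hgo]
  -- first pair nonnegative
  have e0 : ee M 0 = (M - 4)⁻¹ := by unfold ee; norm_num
  have e1 : ee M 1 = (4*M - 4)⁻¹ := by unfold ee; norm_num; ring_nf
  have hh0 : 0 ≤ g 0 + g 1 := by
    have hg0 : g 0 = Real.sin x * (M-4)⁻¹ := by
      simp only [hgdef, Nat.cast_zero, zero_add, one_mul, e0]
    have hg1 : g 1 = Real.sin (2*x) * (4*M-4)⁻¹ := by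
      simp only [hgdef, Nat.cast_one, e1]; norm_num
    have ha : (0:ℝ) < M - 4 := by linarith
    have hbp : (0:ℝ) < 4*M - 4 := by linarith
    have hab : 2*(4*M-4)⁻¹ ≤ (M-4)⁻¹ := by
      have h1 : (2:ℝ)*(4*M-4)⁻¹ = ((2*M-2))⁻¹ := by
        have hA : (4*M-4) ≠ 0 := by intro h; nlinarith [h]
        have hB : (2*M-2) ≠ 0 := by intro h; nlinarith [h]
        field_simp
        ring
      rw [h1]
      exact inv_anti₀ (by linarith) (by linarith)
    rw [hg0, hg1, Real.sin_two_mul]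
    have hk2 : -(2*Real.sin x*(4*M-4)⁻¹) ≤ 2*Real.sin x*Real.cos x*(4*M-4)⁻¹ := by
      have := Real.neg_one_le_cos x
      nlinarith [mul_pos hsinxpos (inv_pos.mpr hbp)]
    nlinarith [mul_nonneg hsinxpos.le (sub_nonneg.mpr hab)]
  -- lower bound for later pairs
  have hlow : ∀ n : ℕ,
      -(2*Real.cos (x/2)*ee M (2*n+3) +
        (2*(n:ℝ)+3)*(ee M (2*n+2) - ee M (2*n+3))*Real.sin x) ≤
      g (2*(n+1)) + g (2*(n+1)+1) := by
    intro n
    have hg2 : g (2*(n+1)) = Real.sin ((2*(n:ℝ)+3)*x) * ee M (2*n+2) := by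
      simp only [hgdef]
      rw [show 2*(n+1) = 2*n+2 by ring]
      congr 2
      push_cast; ring
    have hg3 : g (2*(n+1)+1) = Real.sin ((2*(n:ℝ)+4)*x) * ee M (2*n+3) := by
      simp only [hgdef]
      rw [show 2*(n+1)+1 = 2*n+3 by ring]
      congr 2
      push_cast; ring
    have s1 : -(2*Real.cos (x/2)) ≤ Real.sin ((2*(n:ℝ)+3)*x) + Real.sin ((2*(n:ℝ)+4)*x) := by
      rw [my_sin_add_sin ((2*(n:ℝ)+3)*x) ((2*(n:ℝ)+4)*x),
        show ((2*(n:ℝ)+3)*x - (2*(n:ℝ)+4)*x)/2 = -(x/2) by ring, Real.cos_neg]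
      nlinarith [Real.neg_one_le_sin (((2*(n:ℝ)+3)*x + (2*(n:ℝ)+4)*x)/2), hcx]
    have s2 : -((2*(n:ℝ)+3) * Real.sin x) ≤ Real.sin ((2*(n:ℝ)+3)*x) := by
      have habs := abs_sin_nat_mul_le x (2*n+3)
      rw [abs_of_pos hsinxpos] at habs
      have hcast : ((2*n+3:ℕ):ℝ) = 2*(n:ℝ)+3 := by push_cast; ring
      rw [hcast] at habs
      have := neg_abs_le (Real.sin ((2*(n:ℝ)+3)*x))
      linarith
    have s3 := b2 hM n
    have hq := ee_pos hM (2*n+3)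
    rw [hg2, hg3]
    have t1 : ee M (2*n+3) * (-(2*Real.cos (x/2))) ≤
        ee M (2*n+3) * (Real.sin ((2*(n:ℝ)+3)*x) + Real.sin ((2*(n:ℝ)+4)*x)) :=
      mul_le_mul_of_nonneg_left s1 hq.le
    have t2 : (ee M (2*n+2) - ee M (2*n+3)) * (-((2*(n:ℝ)+3) * Real.sin x)) ≤
        (ee M (2*n+2) - ee M (2*n+3)) * Real.sin ((2*(n:ℝ)+3)*x) :=
      mul_le_mul_of_nonneg_left s2 s3
    nlinarith [t1, t2]
  -- the bounding series
  obtain ⟨q, hqdef⟩ : ∃ q : ℕ → ℝ, q = fun n : ℕ => 2*Real.cos (x/2)*ee M (2*n+3) +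
      (2*(n:ℝ)+3)*(ee M (2*n+2) - ee M (2*n+3))*Real.sin x := ⟨_, rfl⟩
  obtain ⟨C, hCdef⟩ : ∃ C : ℝ, C = (2*Real.cos (x/2)*(9/35) + Real.sin x*(1701/2695))*(1/M) :=
    ⟨_, rfl⟩
  have hMpos : (0:ℝ) < M := by linarith
  have hCnn : 0 ≤ C := by
    simp only [hCdef]
    have := hsinxpos
    positivity
  have hqb : ∀ n : ℕ, q n ≤ C * (1/(((n:ℝ)+2)^2)) := by
    intro n
    simp only [hqdef, hCdef]
    have h1 := b1 hM n
    have h3 := b3 hM n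
    have hc2 : (0:ℝ) ≤ 2*Real.cos (x/2) := by positivity
    have u1 : 2*Real.cos (x/2)*ee M (2*n+3) ≤
        2*Real.cos (x/2)*((9/35) * (1/M) * (1/(((n:ℝ)+2)^2))) :=
      mul_le_mul_of_nonneg_left h1 hc2
    have u2 : (2*(n:ℝ)+3)*(ee M (2*n+2) - ee M (2*n+3))*Real.sin x ≤
        ((1701/2695) * (1/M) * (1/(((n:ℝ)+2)^2)))*Real.sin x :=
      mul_le_mul_of_nonneg_right h3 hsinxpos.le
    have : (2*Real.cos (x/2)*(9/35) + Real.sin x*(1701/2695))*(1/M) * (1/(((n:ℝ)+2)^2)) =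
        2*Real.cos (x/2)*((9/35) * (1/M) * (1/(((n:ℝ)+2)^2))) +
        ((1701/2695) * (1/M) * (1/(((n:ℝ)+2)^2)))*Real.sin x := by ring
    linarith
  have hqpos : ∀ n : ℕ, 0 ≤ q n := by
    intro n
    simp only [hqdef]
    have h2 := b2 hM n
    have hq3 := ee_pos hM (2*n+3)
    have hn : (0:ℝ) ≤ (n:ℝ) := Nat.cast_nonneg n
    have : (0:ℝ) ≤ (2*(n:ℝ)+3)*(ee M (2*n+2) - ee M (2*n+3))*Real.sin x := by
      apply mul_nonneg (mul_nonneg (by linarith) h2) hsinxpos.le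
    nlinarith [mul_pos hcx hq3]
  have hSsig : Summable (fun n : ℕ => 1/(((n:ℝ)+2)^2)) := by
    have h := (summable_nat_add_iff (f := fun n : ℕ => 1/(n:ℝ)^2) 2).mpr
      (summable_one_div_nat_pow.mpr one_lt_two)
    refine h.congr fun k => ?_
    push_cast
    ring
  have hqsum : Summable q := Summable.of_nonneg_of_le hqpos hqb (hSsig.mul_left C)
  have htsumq : ∑' n, q n ≤ C * (3/4) := by
    calc ∑' n, q n ≤ ∑' n : ℕ, C * (1/(((n:ℝ)+2)^2)) :=
          Summable.tsum_le_tsum hqb hqsum (hSsig.mul_left C)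
      _ = C * ∑' n : ℕ, 1/(((n:ℝ)+2)^2) := tsum_mul_left
      _ ≤ C * (3/4) := mul_le_mul_of_nonneg_left sigma_le hCnn
  -- assemble the tail
  have hh : Summable (fun n : ℕ => g (2*n) + g (2*n+1)) := hge.add hgo
  have hh1 : Summable (fun n : ℕ => g (2*(n+1)) + g (2*(n+1)+1)) := by
    have := (summable_nat_add_iff (f := fun n : ℕ => g (2*n) + g (2*n+1)) 1).mpr hh
    exact this
  have htail : -∑' n, q n ≤ ∑' n : ℕ, (g (2*(n+1)) + g (2*(n+1)+1)) := by
    rw [← tsum_neg]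
    refine Summable.tsum_le_tsum (fun n => ?_) hqsum.neg hh1
    simp only [hqdef]
    exact hlow n
  have hsplit : ∑' n : ℕ, (g (2*n) + g (2*n+1)) =
      (g 0 + g 1) + ∑' n : ℕ, (g (2*(n+1)) + g (2*(n+1)+1)) := by
    rw [Summable.tsum_eq_zero_add hh]
  have hT : -(C * (3/4)) ≤ ∑' k, g k := by
    rw [hpair, hsplit]
    have : -∑' n, q n ≥ -(C*(3/4)) := by linarith
    linarith
  -- final numeric assembly
  have hfrac : Real.sin x / (1 - Real.cos x) = Real.cos (x/2) / Real.sin (x/2) := by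
    rw [hsinx, hcos1, div_eq_div_iff (by positivity : (0:ℝ) < 2*Real.sin (x/2)^2).ne' hsx.ne']
    ring
  have hcs : Real.cos (x/2) < Real.cos (x/2) / Real.sin (x/2) := by
    rw [lt_div_iff₀ hsx]
    nlinarith
  have hsinle : Real.sin x ≤ 2*Real.cos (x/2) := by
    rw [hsinx]
    nlinarith
  have hMinv : 1/M ≤ 1/9 := by
    apply one_div_le_one_div_of_le (by norm_num) hM
  have hC2 : 6*(C*(3/4)) ≤ Real.cos (x/2)*(2394/2695) := by
    simp only [hCdef]
    have hraw : 0 ≤ 2*Real.cos (x/2)*(9/35) + Real.sin x*(1701/2695) := by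
      have := hsinxpos
      positivity
    have hrawle : 2*Real.cos (x/2)*(9/35) + Real.sin x*(1701/2695) ≤
        2*Real.cos (x/2)*(2394/2695) := by nlinarith
    have := mul_le_mul hrawle hMinv (by positivity) (by positivity)
    nlinarith
  rw [hfrac]
  linarith


/-- For every integer `m ≥ 3`, the function `φ_m` satisfies `φ_m'(x) > 0` for all
`x ∈ (0,π)`; that is, `φ_m` is strictly increasing on `(0,π)`. -/
theorem phi_first_deriv_pos (m : ℕ) (hm : 3 ≤ m) (x : ℝ) (hx : x ∈ Set.Ioo 0 Real.pi) :
    0 < deriv (phi m) x := by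
  have hm3 : (3:ℝ) ≤ (m:ℝ) := by exact_mod_cast hm
  have hM : (9:ℝ) ≤ ((m:ℝ))^2 := by nlinarith
  have h := hasDerivAt_phi m hm x hx
  rw [h.deriv]
  exact deriv_expr_pos hM x hx.1 hx.2
end

section
/- For all x, y ∈ [0,π] with x ≠ y, log((1 − cos(x+y))/(1 − cos(x−y))) ≤ 2·sin(y)·cot(|x−y|/2). -/
/-- Key inequality: `sin((x+y)/2) - sin(|x-y|/2) ≤ sin y * cos(|x-y|/2)`. -/
lemma key_ineq (x y : ℝ) (hx : x ∈ Set.Icc 0 Real.pi)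
    (hy : y ∈ Set.Icc 0 Real.pi) :
    Real.sin ((x + y) / 2) - Real.sin (|x - y| / 2) ≤
      Real.sin y * Real.cos (|x - y| / 2) := by
  obtain ⟨hx0, hxp⟩ := hx
  obtain ⟨hy0, hyp⟩ := hy
  have hsu : 0 ≤ Real.sin (y / 2) := Real.sin_nonneg_of_nonneg_of_le_pi (by linarith) (by linarith)
  rcases le_or_gt x y with h | h
  · rw [abs_of_nonpos (by linarith), neg_sub]
    have hsv : 0 ≤ Real.sin ((y - x) / 2) :=
      Real.sin_nonneg_of_nonneg_of_le_pi (by linarith) (by linarith)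
    have e1 : (x + y) / 2 = (y / 2 + y / 2) - (y - x) / 2 := by ring
    have e2 : Real.sin y = 2 * Real.sin (y / 2) * Real.cos (y / 2) := by
      rw [show y = 2 * (y / 2) by ring, Real.sin_two_mul]; norm_num
    rw [e1, Real.sin_sub, Real.sin_add, Real.cos_add, e2]
    nlinarith [Real.sin_sq_add_cos_sq (y / 2),
      mul_nonneg hsv (sq_nonneg (Real.cos (y / 2)))]
  · rw [abs_of_pos (by linarith)]
    have hsv : 0 ≤ Real.sin ((x - y) / 2) :=
      Real.sin_nonneg_of_nonneg_of_le_pi (by linarith) (by linarith)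
    have e1 : (x + y) / 2 = (y / 2 + y / 2) + (x - y) / 2 := by ring
    have e2 : Real.sin y = 2 * Real.sin (y / 2) * Real.cos (y / 2) := by
      rw [show y = 2 * (y / 2) by ring, Real.sin_two_mul]; norm_num
    rw [e1, Real.sin_add, Real.sin_add, Real.cos_add, e2]
    nlinarith [mul_nonneg (mul_nonneg hsu hsu) hsv, Real.sin_sq_add_cos_sq (y / 2)]

/-- For all `x, y ∈ [0,π]` with `x ≠ y`,
`log((1 − cos(x+y))/(1 − cos(x−y))) ≤ 2·sin(y)·cot(|x−y|/2)`. -/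
theorem log_ratio_le_sin_cot (x y : ℝ) (hx : x ∈ Set.Icc 0 Real.pi)
    (hy : y ∈ Set.Icc 0 Real.pi) (hxy : x ≠ y) :
    Real.log ((1 - Real.cos (x + y)) / (1 - Real.cos (x - y))) ≤
      2 * Real.sin y * Real.cot (|x - y| / 2) := by
  obtain ⟨hx0, hxp⟩ := hx
  obtain ⟨hy0, hyp⟩ := hy
  have hxy' : x - y ≠ 0 := sub_ne_zero.mpr hxy
  set a := (x + y) / 2 with ha
  set b := |x - y| / 2 with hb
  have hb0 : 0 < b := by
    have : 0 < |x - y| := abs_pos.mpr hxy'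
    rw [hb]; linarith
  have hbpi : b ≤ Real.pi / 2 := by
    have h1 : |x - y| ≤ Real.pi := abs_sub_le_iff.mpr ⟨by linarith, by linarith⟩
    rw [hb]; linarith
  have pi_pos := Real.pi_pos
  have hsb : 0 < Real.sin b := Real.sin_pos_of_pos_of_lt_pi hb0 (by linarith)
  have hcb : 0 ≤ Real.cos b := Real.cos_nonneg_of_mem_Icc ⟨by linarith, hbpi⟩
  have ha0 : 0 < a := by
    rcases lt_or_gt_of_ne hxy with h | h
    · rw [ha]; linarith
    · rw [ha]; linarith
  have hap : a < Real.pi := by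
    rcases lt_or_gt_of_ne hxy with h | h
    · rw [ha]; linarith
    · rw [ha]; linarith
  have hsa : 0 < Real.sin a := Real.sin_pos_of_pos_of_lt_pi ha0 hap
  -- rewrite the ratio
  have h1 : 1 - Real.cos (x + y) = 2 * Real.sin a ^ 2 := by
    have : x + y = 2 * a := by rw [ha]; ring
    rw [this, Real.cos_two_mul]
    nlinarith [Real.sin_sq_add_cos_sq a]
  have h2 : 1 - Real.cos (x - y) = 2 * Real.sin b ^ 2 := by
    have hsq : Real.sin ((x - y) / 2) ^ 2 = Real.sin b ^ 2 := by
      rcases abs_cases (x - y) with ⟨he, _⟩ | ⟨he, _⟩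
      · rw [hb, he]
      · rw [hb, he]
        have : -(x - y) / 2 = -((x - y) / 2) := by ring
        rw [this, Real.sin_neg]; ring
    have : x - y = 2 * ((x - y) / 2) := by ring
    rw [this, Real.cos_two_mul]
    nlinarith [Real.sin_sq_add_cos_sq ((x - y) / 2)]
  rw [h1, h2, Real.cot_eq_cos_div_sin]
  set t := Real.sin a / Real.sin b with htdef
  have ht : 0 < t := div_pos hsa hsb
  have hratio : 2 * Real.sin a ^ 2 / (2 * Real.sin b ^ 2) = t ^ 2 := by
    rw [htdef]; field_simp
  rw [hratio]
  have hlog : Real.log (t ^ 2) = 2 * Real.log t := by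
    rw [Real.log_pow]; push_cast; ring
  rw [hlog]
  have hkey : Real.sin a - Real.sin b ≤ Real.sin y * Real.cos b :=
    key_ineq x y ⟨hx0, hxp⟩ ⟨hy0, hyp⟩
  have hlt : Real.log t ≤ t - 1 := Real.log_le_sub_one_of_pos ht
  have ht1 : t - 1 = (Real.sin a - Real.sin b) / Real.sin b := by
    rw [htdef]; field_simp
  have hfin : (Real.sin a - Real.sin b) / Real.sin b ≤
      Real.sin y * Real.cos b / Real.sin b :=
    by gcongr
  calc 2 * Real.log t ≤ 2 * (t - 1) := by linarith
    _ = 2 * ((Real.sin a - Real.sin b) / Real.sin b) := by rw [ht1]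
    _ ≤ 2 * (Real.sin y * Real.cos b / Real.sin b) := by linarith
    _ = 2 * Real.sin y * (Real.cos b / Real.sin b) := by ring
end

section
/- For all x, y ∈ [0,π] with x ≠ y, the partial sums 4·∑_{k=1}^N sin(kx)·sin(ky)/k converge as N → ∞ to log((1 − cos(x+y))/(1 − cos(x−y))). -/
open Real Filter
open Finset Topology

/-- Boundary log series: for `‖z‖ = 1`, `z ≠ 1`,
`∑ z^(k+1)/(k+1) → -log (1-z)`. -/
lemma tendsto_sum_pow_succ_div (z : ℂ) (hz1 : ‖z‖ = 1) (hz : z ≠ 1) :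
    Tendsto (fun N : ℕ => ∑ k ∈ range N, z ^ (k + 1) / (k + 1)) atTop
      (𝓝 (-Complex.log (1 - z))) := by
  have hz1' : (1 : ℂ) - z ≠ 0 := sub_ne_zero.mpr (Ne.symm hz)
  -- Dirichlet's test gives convergence of the partial sums
  have hb : ∀ n, ‖∑ i ∈ range n, z ^ (i + 1)‖ ≤ 2 / ‖1 - z‖ := by
    intro n
    have : ∑ i ∈ range n, z ^ (i + 1) = z * ((z ^ n - 1) / (z - 1)) := by
      rw [← geom_sum_eq (fun h => hz (by simpa using h)) n, Finset.mul_sum]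
      simp [pow_succ, mul_comm]
    rw [this, norm_mul, hz1, one_mul, norm_div]
    rw [norm_sub_rev z 1]
    gcongr
    calc ‖z ^ n - 1‖ ≤ ‖z ^ n‖ + ‖(1:ℂ)‖ := norm_sub_le _ _
      _ = 2 := by simp [norm_pow, hz1]; norm_num
  have hanti : Antitone (fun n : ℕ => ((n : ℝ) + 1)⁻¹) := by
    intro a b hab
    have : (a : ℝ) + 1 ≤ (b : ℝ) + 1 := by exact_mod_cast Nat.succ_le_succ hab
    exact inv_anti₀ (by positivity) this
  have h0 : Tendsto (fun n : ℕ => ((n : ℝ) + 1)⁻¹) atTop (𝓝 0) :=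
    tendsto_one_div_add_atTop_nhds_zero_nat.congr (by intro n; simp [one_div])
  have hc : CauchySeq fun n => ∑ i ∈ range n, ((i : ℝ) + 1)⁻¹ • z ^ (i + 1) :=
    hanti.cauchySeq_series_mul_of_tendsto_zero_of_bounded h0 hb
  obtain ⟨L, hL⟩ := cauchySeq_tendsto_of_complete hc
  have hL' : Tendsto (fun N => ∑ k ∈ range N, z ^ (k + 1) / (k + 1)) atTop (𝓝 L) := by
    refine hL.congr fun N => Finset.sum_congr rfl fun k _ => ?_
    rw [Complex.real_smul]
    push_cast
    rw [div_eq_inv_mul]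
  -- the coefficient sequence for Abel's theorem
  set c : ℕ → ℂ := fun n => z ^ n / n with hc_def
  have hsum : Tendsto (fun n => ∑ i ∈ range n, c i) atTop (𝓝 L) := by
    rw [← tendsto_add_atTop_iff_nat 1]
    refine hL'.congr fun N => ?_
    rw [Finset.sum_range_succ' (fun i => c i) N]
    simp [hc_def]
  have habel := Complex.tendsto_tsum_powerSeries_nhdsWithin_lt hsum
  -- identify the limit using the interior formula and continuity of log
  have hcont : Tendsto (fun w : ℂ => -Complex.log (1 - w * z)) ((𝓝[<] (1:ℝ)).map Complex.ofReal)
      (𝓝 (-Complex.log (1 - z))) := by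
    have h1 : ((𝓝[<] (1:ℝ)).map Complex.ofReal) ≤ 𝓝 (1 : ℂ) :=
      (Complex.continuous_ofReal.tendsto 1).mono_left nhdsWithin_le_nhds
    have hslit : (1 : ℂ) - 1 * z ∈ Complex.slitPlane := by
      rw [one_mul]
      left
      simp only [Complex.sub_re, Complex.one_re, sub_pos]
      have hn : z.re ^ 2 + z.im ^ 2 = 1 := by
        have h1 := Complex.sq_norm z
        rw [Complex.normSq_apply, hz1] at h1
        nlinarith [h1]
      have hle : z.re ≤ 1 := by nlinarith [sq_nonneg z.im]
      rcases lt_or_eq_of_le hle with h | h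
      · exact h
      · exfalso
        apply hz
        have him : z.im = 0 := by nlinarith
        exact Complex.ext h him
    have : ContinuousAt (fun w : ℂ => -Complex.log (1 - w * z)) 1 := by
      refine ContinuousAt.neg ?_
      exact (continuousAt_clog (by simpa using hslit)).comp
        (by fun_prop)
    simpa [one_mul] using this.tendsto.mono_left h1
  have heq : (fun w : ℂ => ∑' n, c n * w ^ n) =ᶠ[(𝓝[<] (1:ℝ)).map Complex.ofReal]
      (fun w : ℂ => -Complex.log (1 - w * z)) := by
    rw [Filter.eventuallyEq_iff_exists_mem]
    refine ⟨Complex.ofReal '' Set.Ioo 0 1, ?_, ?_⟩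
    · rw [Filter.mem_map]
      filter_upwards [Ioo_mem_nhdsLT_of_mem (by norm_num : (1:ℝ) ∈ Set.Ioc 0 1)] with r hr
      exact ⟨r, hr, rfl⟩
    · rintro w ⟨r, hr, rfl⟩
      have hwz : ‖(r : ℂ) * z‖ < 1 := by
        rw [norm_mul, hz1, mul_one, Complex.norm_real, Real.norm_eq_abs,
          abs_of_pos hr.1]
        exact hr.2
      have hs := Complex.hasSum_taylorSeries_neg_log hwz
      show ∑' n, c n * (r:ℂ) ^ n = -Complex.log (1 - (r:ℂ) * z)
      rw [← hs.tsum_eq]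
      refine tsum_congr fun n => ?_
      rw [hc_def]
      rw [mul_pow]
      ring
  have habel' : Tendsto (fun w : ℂ => -Complex.log (1 - w * z))
      ((𝓝[<] (1:ℝ)).map Complex.ofReal) (𝓝 L) := habel.congr' heq
  have : L = -Complex.log (1 - z) :=
    tendsto_nhds_unique habel' hcont
  rwa [this] at hL'

/-- For `cos θ ≠ 1`, `∑ cos((k+1)θ)/(k+1) → -(1/2) log (2 - 2 cos θ)`. -/
lemma tendsto_sum_cos_div (θ : ℝ) (hθ : Real.cos θ ≠ 1) :
    Tendsto (fun N : ℕ => ∑ k ∈ range N, Real.cos (((k : ℝ) + 1) * θ) / ((k : ℝ) + 1)) atTop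
      (𝓝 (-(1 / 2) * Real.log (2 - 2 * Real.cos θ))) := by
  set z : ℂ := Complex.exp (θ * Complex.I) with hz_def
  have hz1 : ‖z‖ = 1 := by
    rw [hz_def, Complex.norm_exp_ofReal_mul_I]
  have hzre : z.re = Real.cos θ := Complex.exp_ofReal_mul_I_re θ
  have hzim : z.im = Real.sin θ := Complex.exp_ofReal_mul_I_im θ
  have hzne : z ≠ 1 := by
    intro h
    apply hθ
    rw [← hzre, h, Complex.one_re]
  have hA := tendsto_sum_pow_succ_div z hz1 hzne
  have hre := (Complex.continuous_re.tendsto _).comp hA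
  have hterm : ∀ N : ℕ, (∑ k ∈ range N, z ^ (k + 1) / ((k : ℂ) + 1)).re
      = ∑ k ∈ range N, Real.cos (((k : ℝ) + 1) * θ) / ((k : ℝ) + 1) := by
    intro N
    rw [Complex.re_sum]
    refine Finset.sum_congr rfl fun k _ => ?_
    have hpow : z ^ (k + 1) = Complex.exp ((((k : ℝ) + 1) * θ : ℝ) * Complex.I) := by
      rw [hz_def, ← Complex.exp_nat_mul]
      congr 1
      push_cast
      ring
    have hcast : ((k : ℂ) + 1) = (((k : ℝ) + 1 : ℝ) : ℂ) := by push_cast; ring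
    rw [hpow, hcast, Complex.div_ofReal_re, Complex.exp_ofReal_mul_I_re]
  have hrhs : (-Complex.log (1 - z)).re = -(1 / 2) * Real.log (2 - 2 * Real.cos θ) := by
    rw [Complex.neg_re, Complex.log_re]
    have habs : ‖1 - z‖ = Real.sqrt (2 - 2 * Real.cos θ) := by
      rw [Complex.norm_def]
      congr 1
      rw [Complex.normSq_apply, Complex.sub_re, Complex.sub_im, Complex.one_re,
        Complex.one_im, hzre, hzim]
      nlinarith [Real.sin_sq_add_cos_sq θ]
    rw [habs, Real.log_sqrt (by nlinarith [Real.cos_le_one θ])]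
    ring
  rw [← hrhs]
  refine hre.congr fun N => ?_
  simp only [Function.comp_apply]
  exact hterm N

/-- For all `x, y ∈ [0,π]` with `x ≠ y`, the partial sums `4·∑_{k=1}^N sin(kx)·sin(ky)/k`
converge as `N → ∞` to `log((1 − cos(x+y))/(1 − cos(x−y)))`. -/
theorem log_ratio_sine_series (x y : ℝ) (hx : x ∈ Set.Icc 0 Real.pi)
    (hy : y ∈ Set.Icc 0 Real.pi) (hxy : x ≠ y) :
    Tendsto
      (fun N : ℕ => 4 * ∑ k ∈ Finset.range N,
        Real.sin (((k : ℝ) + 1) * x) * Real.sin (((k : ℝ) + 1) * y) / ((k : ℝ) + 1))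
      atTop
      (nhds (Real.log ((1 - Real.cos (x + y)) / (1 - Real.cos (x - y))))) := by
  obtain ⟨hx0, hxπ⟩ := hx
  obtain ⟨hy0, hyπ⟩ := hy
  have hπ := Real.pi_pos
  -- cos (x - y) ≠ 1
  have hB : Real.cos (x - y) ≠ 1 := by
    intro h
    rw [Real.cos_eq_one_iff] at h
    obtain ⟨n, hn⟩ := h
    have h1 : (n : ℝ) * (2 * Real.pi) ≤ Real.pi := by rw [hn]; linarith
    have h2 : -Real.pi ≤ (n : ℝ) * (2 * Real.pi) := by rw [hn]; linarith
    have hn0 : n = 0 := by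
      by_contra hne
      rcases lt_or_gt_of_ne hne with hlt | hgt
      · have hn1 : n ≤ -1 := by omega
        have : (n : ℝ) ≤ -1 := by exact_mod_cast hn1
        nlinarith
      · have : (1 : ℝ) ≤ (n : ℝ) := by exact_mod_cast hgt
        nlinarith
    rw [hn0] at hn
    simp at hn
    exact hxy (by linarith)
  -- cos (x + y) ≠ 1
  have hA : Real.cos (x + y) ≠ 1 := by
    intro h
    rw [Real.cos_eq_one_iff] at h
    obtain ⟨n, hn⟩ := h
    have h1 : (n : ℝ) * (2 * Real.pi) ≤ 2 * Real.pi := by rw [hn]; linarith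
    have h2 : 0 ≤ (n : ℝ) * (2 * Real.pi) := by rw [hn]; linarith
    have hn01 : n = 0 ∨ n = 1 := by
      have hle : (n : ℝ) ≤ 1 := by nlinarith
      have hge : (0 : ℝ) ≤ (n : ℝ) := by nlinarith
      have : n ≤ 1 := by exact_mod_cast hle
      have : 0 ≤ n := by exact_mod_cast hge
      omega
    rcases hn01 with h0 | h1'
    · rw [h0] at hn; simp at hn
      apply hxy; linarith
    · rw [h1'] at hn
      simp at hn
      have hxπ' : x = Real.pi := by linarith
      have hyπ' : y = Real.pi := by linarith
      exact hxy (by rw [hxπ', hyπ'])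
  have hTA := tendsto_sum_cos_div (x + y) hA
  have hTB := tendsto_sum_cos_div (x - y) hB
  have hcomb := (hTB.const_mul (2 : ℝ)).sub (hTA.const_mul (2 : ℝ))
  have hfun : ∀ N : ℕ,
      2 * (∑ k ∈ range N, Real.cos (((k : ℝ) + 1) * (x - y)) / ((k : ℝ) + 1))
        - 2 * (∑ k ∈ range N, Real.cos (((k : ℝ) + 1) * (x + y)) / ((k : ℝ) + 1))
      = 4 * ∑ k ∈ Finset.range N,
          Real.sin (((k : ℝ) + 1) * x) * Real.sin (((k : ℝ) + 1) * y) / ((k : ℝ) + 1) := by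
    intro N
    rw [Finset.mul_sum, Finset.mul_sum, Finset.mul_sum, ← Finset.sum_sub_distrib]
    refine Finset.sum_congr rfl fun k _ => ?_
    rw [show ((k : ℝ) + 1) * (x - y) = ((k : ℝ) + 1) * x - ((k : ℝ) + 1) * y by ring,
      show ((k : ℝ) + 1) * (x + y) = ((k : ℝ) + 1) * x + ((k : ℝ) + 1) * y by ring,
      Real.cos_sub, Real.cos_add]
    ring
  have hval : 2 * (-(1 / 2) * Real.log (2 - 2 * Real.cos (x - y)))
      - 2 * (-(1 / 2) * Real.log (2 - 2 * Real.cos (x + y)))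
      = Real.log ((1 - Real.cos (x + y)) / (1 - Real.cos (x - y))) := by
    have hA' : 0 < 1 - Real.cos (x + y) := by
      rcases lt_or_eq_of_le (Real.cos_le_one (x + y)) with h | h
      · linarith
      · exact absurd h hA
    have hB' : 0 < 1 - Real.cos (x - y) := by
      rcases lt_or_eq_of_le (Real.cos_le_one (x - y)) with h | h
      · linarith
      · exact absurd h hB
    rw [show (2 : ℝ) - 2 * Real.cos (x + y) = 2 * (1 - Real.cos (x + y)) by ring,
      show (2 : ℝ) - 2 * Real.cos (x - y) = 2 * (1 - Real.cos (x - y)) by ring,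
      Real.log_mul (by norm_num) (ne_of_gt hA'), Real.log_mul (by norm_num) (ne_of_gt hB'),
      Real.log_div (ne_of_gt hA') (ne_of_gt hB')]
    ring
  rw [← hval]
  exact hcomb.congr hfun
end

section
/- The Clausen function Cl₂(x) = ∑_{k=1}^∞ sin(kx)/k² is differentiable at every x ∈ (0,2π) with derivative Cl₂'(x) = −(1/2)·log(2 − 2·cos x). -/
open Filter Finset Complex Topology

open Filter Finset Complex Topology

lemma geomBound {z : ℂ} (hz : z ≠ 1) (hza : ‖z‖ = 1) (n : ℕ) :
    ‖∑ i ∈ Finset.range n, z ^ (i + 1)‖ ≤ 2 / ‖1 - z‖ := by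
  have hz1 : z - 1 ≠ 0 := sub_ne_zero.mpr hz
  have h1 : ∑ i ∈ Finset.range n, z ^ (i + 1) = z * ((z ^ n - 1) / (z - 1)) := by
    rw [← geom_sum_eq hz n, Finset.mul_sum]
    exact Finset.sum_congr rfl fun i _ ↦ pow_succ' z i
  rw [h1]
  have habs : ‖1 - z‖ = ‖z - 1‖ := by
    rw [← neg_sub z 1, norm_neg]
  rw [habs]
  calc ‖z * ((z ^ n - 1) / (z - 1))‖
      = ‖z‖ * (‖z ^ n - 1‖ / ‖z - 1‖) := by
        rw [norm_mul, norm_div]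
    _ ≤ 1 * (2 / ‖z - 1‖) := by
        rw [hza]
        gcongr
        calc ‖z ^ n - 1‖ ≤ ‖z ^ n‖ + ‖(1:ℂ)‖ :=
              (norm_sub_le _ _)
          _ ≤ 2 := by
            rw [norm_pow, hza, one_pow, norm_one]; norm_num
    _ = 2 / ‖z - 1‖ := one_mul _

lemma sumBound {z : ℂ} (hz : z ≠ 1) (hza : ‖z‖ = 1) (n : ℕ) :
    ‖∑ i ∈ Finset.range n, ((i : ℝ) + 1)⁻¹ • z ^ (i + 1)‖ ≤ 2 / ‖1 - z‖ := by
  set B := 2 / ‖1 - z‖ with hB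
  have hBnn : 0 ≤ B := by positivity
  set f : ℕ → ℝ := fun i ↦ ((i : ℝ) + 1)⁻¹ with hf
  set g : ℕ → ℂ := fun i ↦ z ^ (i + 1) with hg
  have hGb : ∀ m, ‖∑ i ∈ Finset.range m, g i‖ ≤ B := fun m ↦ geomBound hz hza m
  rw [Finset.sum_range_by_parts]
  calc ‖f (n - 1) • (∑ i ∈ Finset.range n, g i) -
        ∑ i ∈ Finset.range (n - 1), (f (i + 1) - f i) • (∑ j ∈ Finset.range (i + 1), g j)‖
      ≤ ‖f (n - 1) • (∑ i ∈ Finset.range n, g i)‖ +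
        ‖∑ i ∈ Finset.range (n - 1), (f (i + 1) - f i) • (∑ j ∈ Finset.range (i + 1), g j)‖ :=
        norm_sub_le _ _
    _ ≤ f (n - 1) * B + ∑ i ∈ Finset.range (n - 1), (f i - f (i + 1)) * B := by
        gcongr
        · rw [norm_smul, Real.norm_eq_abs, abs_of_pos (by positivity)]
          exact mul_le_mul_of_nonneg_left (hGb n) (by positivity)
        · refine (norm_sum_le _ _).trans (Finset.sum_le_sum fun i _ ↦ ?_)
          rw [norm_smul, Real.norm_eq_abs]
          have h1 : f (i + 1) - f i ≤ 0 := by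
            simp only [hf]
            rw [sub_nonpos]
            apply inv_anti₀ (by positivity)
            push_cast; linarith
          rw [abs_of_nonpos h1, neg_sub]
          exact mul_le_mul_of_nonneg_left (hGb _) (by linarith)
    _ = f (n - 1) * B + (f 0 - f (n - 1)) * B := by
        rw [← Finset.sum_mul, Finset.sum_range_sub' f (n - 1)]
    _ = f 0 * B := by ring
    _ = B := by simp [hf]


lemma tendsto_partial_complex {z : ℂ} (hz : z ≠ 1) (hza : ‖z‖ = 1)
    (hre : 0 < (1 - z).re) :
    Tendsto (fun n ↦ ∑ i ∈ Finset.range n, ((i : ℝ) + 1)⁻¹ • z ^ (i + 1)) atTop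
      (𝓝 (-Complex.log (1 - z))) := by
  set f : ℕ → ℂ := fun k ↦ z ^ (k + 1) / ((k : ℂ) + 1) with hfdef
  have hsmul : ∀ i : ℕ, ((i : ℝ) + 1)⁻¹ • z ^ (i + 1) = f i := by
    intro i
    rw [hfdef]
    simp only [Complex.real_smul]
    push_cast
    rw [inv_mul_eq_div]
  simp_rw [hsmul]
  -- Step 1: partial sums converge (Dirichlet test)
  have hcauchy : CauchySeq fun n ↦ ∑ i ∈ Finset.range n, f i := by
    have h := Antitone.cauchySeq_series_mul_of_tendsto_zero_of_bounded
      (f := fun i : ℕ ↦ ((i : ℝ) + 1)⁻¹) (z := fun i : ℕ ↦ z ^ (i + 1))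
      (b := 2 / ‖1 - z‖)
      (fun m n hmn ↦ by
        apply inv_anti₀ (by positivity)
        push_cast; exact_mod_cast Nat.add_le_add_right hmn 1)
      (by
        have := tendsto_one_div_add_atTop_nhds_zero_nat (𝕜 := ℝ)
        simpa [one_div] using this)
      (fun n ↦ by
        -- geometric sum bound
        have hz1 : z - 1 ≠ 0 := sub_ne_zero.mpr hz
        have h1 : ∑ i ∈ Finset.range n, z ^ (i + 1) = z * ((z ^ n - 1) / (z - 1)) := by
          rw [← geom_sum_eq hz n, Finset.mul_sum]
          exact Finset.sum_congr rfl fun i _ ↦ pow_succ' z i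
        rw [h1]
        have habs : ‖1 - z‖ = ‖z - 1‖ := by
          rw [← neg_sub z 1, norm_neg]
        rw [habs]
        calc ‖z * ((z ^ n - 1) / (z - 1))‖
            = ‖z‖ * (‖z ^ n - 1‖ / ‖z - 1‖) := by
              rw [norm_mul, norm_div]
          _ ≤ 1 * (2 / ‖z - 1‖) := by
              rw [hza]; gcongr
              calc ‖z ^ n - 1‖ ≤ ‖z ^ n‖ + ‖(1:ℂ)‖ :=
                    norm_sub_le _ _
                _ ≤ 2 := by rw [norm_pow, hza, one_pow, norm_one]; norm_num
          _ = 2 / ‖z - 1‖ := one_mul _)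
    convert h using 2 with n
    exact Finset.sum_congr rfl fun i _ ↦ (hsmul i).symm
  obtain ⟨l, hl⟩ := cauchySeq_tendsto_of_complete hcauchy
  -- Step 2: identify l = -log(1-z) via Abel's limit theorem
  have habel := Complex.tendsto_tsum_powerSeries_nhdsWithin_lt hl
  have hne : (1 : ℂ) - z ≠ 0 := fun h ↦ by simp [sub_eq_zero] at h; exact hz h.symm
  have hslit : (1 : ℂ) - z ∈ Complex.slitPlane := Or.inl hre
  -- the comparison function
  have hcont : Tendsto (fun r : ℝ ↦ -Complex.log (1 - z * (r : ℂ)) / (r : ℂ))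
      (𝓝[<] (1 : ℝ)) (𝓝 (-Complex.log (1 - z))) := by
    have h1 : ContinuousAt (fun w : ℂ ↦ -Complex.log (1 - z * w) / w) 1 := by
      apply ContinuousAt.div
      · exact (continuousAt_clog (by simpa using hslit)).comp
          (by fun_prop) |>.neg
      · fun_prop
      · simp
    have h2 : Tendsto (fun r : ℝ ↦ (r : ℂ)) (𝓝[<] (1 : ℝ)) (𝓝 1) := by
      exact (Complex.continuous_ofReal.tendsto 1).comp nhdsWithin_le_nhds
    have := h1.tendsto.comp h2
    simpa [Function.comp_def] using this
  -- equality of the two functions on (0,1)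
  have hagree : ∀ r : ℝ, r ∈ Set.Ioo (0:ℝ) 1 →
      ∑' n, f n * (r : ℂ) ^ n = -Complex.log (1 - z * (r : ℂ)) / (r : ℂ) := by
    intro r hr
    have hr0 : (r : ℂ) ≠ 0 := by exact_mod_cast hr.1.ne'
    have hzr : ‖z * (r : ℂ)‖ < 1 := by
      rw [norm_mul, hza, one_mul,
        Complex.norm_real, Real.norm_eq_abs, abs_of_pos hr.1]
      exact hr.2
    have hs := Complex.hasSum_taylorSeries_neg_log hzr
    have hs1 : HasSum (fun n : ℕ ↦ (z * r) ^ (n + 1) / ((n : ℂ) + 1))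
        (-Complex.log (1 - z * r)) := by
      have := (hasSum_nat_add_iff' 1).mpr hs
      simpa using this
    have hs2 := hs1.div_const (r : ℂ)
    have heq : ∀ n : ℕ, (z * r) ^ (n + 1) / ((n : ℂ) + 1) / (r : ℂ) = f n * (r : ℂ) ^ n := by
      intro n
      have hn1 : ((n : ℂ) + 1) ≠ 0 := Nat.cast_add_one_ne_zero n
      rw [hfdef]
      field_simp
      ring
    exact (hs2.congr_fun fun n ↦ (heq n).symm).tsum_eq
  -- conclude l = -log(1-z)
  have hmem : Set.Ioo (0:ℝ) 1 ∈ 𝓝[<] (1 : ℝ) := by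
    apply mem_nhdsWithin.mpr
    exact ⟨Set.Ioi 0, isOpen_Ioi, by norm_num, fun r hr ↦ ⟨hr.1, hr.2⟩⟩
  have habel' : Tendsto (fun r : ℝ ↦ ∑' n, f n * (r : ℂ) ^ n) (𝓝[<] (1:ℝ)) (𝓝 l) := by
    rw [Filter.tendsto_map'_iff] at habel
    exact habel
  have hcont' : Tendsto (fun r : ℝ ↦ ∑' n, f n * (r : ℂ) ^ n) (𝓝[<] (1:ℝ))
      (𝓝 (-Complex.log (1 - z))) :=
    hcont.congr' (Filter.eventuallyEq_of_mem hmem fun r hr ↦ (hagree r hr).symm)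
  have : l = -Complex.log (1 - z) := tendsto_nhds_unique habel' hcont'
  rwa [this] at hl


lemma re_partial (t : ℝ) (n : ℕ) :
    ∑ k ∈ Finset.range n, Real.cos (((k : ℝ) + 1) * t) / ((k : ℝ) + 1)
      = (∑ i ∈ Finset.range n, ((i : ℝ) + 1)⁻¹ • Complex.exp (t * Complex.I) ^ (i + 1)).re := by
  rw [Complex.re_sum]
  refine Finset.sum_congr rfl fun i _ ↦ ?_
  rw [Complex.smul_re]
  have h1 : Complex.exp (t * Complex.I) ^ (i + 1)
      = Complex.exp ((((i : ℝ) + 1) * t : ℝ) * Complex.I) := by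
    rw [← Complex.exp_nat_mul]
    congr 1
    push_cast
    ring
  rw [h1, Complex.exp_ofReal_mul_I_re]
  rw [div_eq_inv_mul, smul_eq_mul]

lemma abs_one_sub_exp (t : ℝ) :
    ‖1 - Complex.exp (t * Complex.I)‖ = Real.sqrt (2 - 2 * Real.cos t) := by
  rw [Complex.norm_def]
  congr 1
  rw [Complex.normSq_apply, Complex.sub_re, Complex.sub_im, Complex.one_re, Complex.one_im,
    Complex.exp_ofReal_mul_I_re, Complex.exp_ofReal_mul_I_im]
  have := Real.sin_sq_add_cos_sq t
  ring_nf
  nlinarith [Real.sin_sq_add_cos_sq t]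

lemma cos_lt_one_of_Ioo {t : ℝ} (h0 : 0 < t) (h2 : t < 2 * Real.pi) : Real.cos t < 1 := by
  refine lt_of_le_of_ne (Real.cos_le_one t) fun h ↦ ?_
  obtain ⟨n, hn⟩ := Real.cos_eq_one_iff t |>.mp h
  have hpi := Real.pi_pos
  rcases lt_trichotomy n 0 with h | h | h
  · have hn1 : (n : ℝ) ≤ -1 := by exact_mod_cast Int.le_sub_one_of_lt h
    nlinarith
  · subst h; simp at hn; linarith
  · have hn1 : (1 : ℝ) ≤ (n : ℝ) := by exact_mod_cast h
    nlinarith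

lemma exp_ne_one {t : ℝ} (hc : Real.cos t < 1) : Complex.exp (t * Complex.I) ≠ 1 := by
  intro h
  have h1 : (Complex.exp (t * Complex.I)).re = 1 := by rw [h]; simp
  rw [Complex.exp_ofReal_mul_I_re] at h1
  linarith

lemma partial_cos_bound {t : ℝ} (hc : Real.cos t < 1) (n : ℕ) :
    |∑ k ∈ Finset.range n, Real.cos (((k : ℝ) + 1) * t) / ((k : ℝ) + 1)|
      ≤ 2 / Real.sqrt (2 - 2 * Real.cos t) := by
  set z := Complex.exp (t * Complex.I) with hzdef
  have hza : ‖z‖ = 1 := Complex.norm_exp_ofReal_mul_I t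
  have hz : z ≠ 1 := exp_ne_one hc
  rw [re_partial]
  calc |(∑ i ∈ Finset.range n, ((i : ℝ) + 1)⁻¹ • z ^ (i + 1)).re|
      ≤ ‖∑ i ∈ Finset.range n, ((i : ℝ) + 1)⁻¹ • z ^ (i + 1)‖ := Complex.abs_re_le_norm _
    _ ≤ 2 / ‖1 - z‖ := sumBound hz hza n
    _ = 2 / Real.sqrt (2 - 2 * Real.cos t) := by rw [hzdef, abs_one_sub_exp]

lemma tendsto_partial_cos {t : ℝ} (h0 : 0 < t) (h2 : t < 2 * Real.pi) :
    Filter.Tendsto (fun n ↦ ∑ k ∈ Finset.range n, Real.cos (((k : ℝ) + 1) * t) / ((k : ℝ) + 1))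
      Filter.atTop (𝓝 (-(1 / 2) * Real.log (2 - 2 * Real.cos t))) := by
  have hc : Real.cos t < 1 := cos_lt_one_of_Ioo h0 h2
  set z := Complex.exp (t * Complex.I) with hzdef
  have hza : ‖z‖ = 1 := Complex.norm_exp_ofReal_mul_I t
  have hz : z ≠ 1 := exp_ne_one hc
  have hre : 0 < (1 - z).re := by
    rw [Complex.sub_re, Complex.one_re, hzdef, Complex.exp_ofReal_mul_I_re]
    linarith
  have h := tendsto_partial_complex hz hza hre
  have h2' := (Complex.continuous_re.tendsto _).comp h
  have key : (-Complex.log (1 - z)).re = -(1 / 2) * Real.log (2 - 2 * Real.cos t) := by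
    rw [Complex.neg_re, Complex.log_re, hzdef, abs_one_sub_exp, Real.log_sqrt (by linarith)]
    ring
  rw [← key]
  exact h2'.congr fun n ↦ (re_partial t n).symm

/-- The Clausen function `Cl₂(x) = ∑_{k=1}^∞ sin(kx)/k²`. -/
noncomputable def Cl2 (x : ℝ) : ℝ :=
  ∑' k : ℕ, Real.sin (((k : ℝ) + 1) * x) / ((k : ℝ) + 1) ^ 2

lemma summable_sin (y : ℝ) :
    Summable (fun k : ℕ ↦ Real.sin (((k : ℝ) + 1) * y) / ((k : ℝ) + 1) ^ 2) := by
  have hs : Summable (fun k : ℕ ↦ 1 / ((k : ℝ) + 1) ^ 2) := by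
    have h := (summable_nat_add_iff 1).mpr (Real.summable_one_div_nat_pow.mpr one_lt_two)
    refine h.congr fun k ↦ ?_
    push_cast
    ring
  refine Summable.of_norm (hs.of_nonneg_of_le (fun k ↦ norm_nonneg _) fun k ↦ ?_)
  rw [Real.norm_eq_abs, abs_div, abs_of_pos (show (0:ℝ) < ((k:ℝ)+1)^2 by positivity)]
  gcongr
  exact Real.abs_sin_le_one _

lemma tendsto_partial_sin (u : ℝ) :
    Filter.Tendsto (fun n ↦ ∑ k ∈ Finset.range n, Real.sin (((k : ℝ) + 1) * u) / ((k : ℝ) + 1) ^ 2)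
      Filter.atTop (𝓝 (Cl2 u)) := by
  unfold Cl2
  exact (summable_sin u).hasSum.tendsto_sum_nat

/-- `Cl₂` is differentiable at every `x ∈ (0,2π)` with derivative
`Cl₂'(x) = −(1/2)·log(2 − 2·cos x)`. -/
theorem hasDerivAt_Cl2 (x : ℝ) (hx : x ∈ Set.Ioo 0 (2 * Real.pi)) :
    HasDerivAt Cl2 (-(1 / 2) * Real.log (2 - 2 * Real.cos x)) x := by
  obtain ⟨hx0, hx2⟩ := hx
  have hpi := Real.pi_pos
  set a := x / 2 with ha
  set b := (x + 2 * Real.pi) / 2 with hb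
  have ha0 : 0 < a := by rw [ha]; linarith
  have hax : a < x := by rw [ha]; linarith
  have hxb : x < b := by rw [hb]; linarith
  have hb2 : b < 2 * Real.pi := by rw [hb]; linarith
  set L : ℝ → ℝ := fun t ↦ -(1 / 2) * Real.log (2 - 2 * Real.cos t) with hL
  have hLcont : ∀ t ∈ Set.Icc a b, ContinuousAt L t := by
    intro t ht
    have h0t : 0 < t := lt_of_lt_of_le ha0 ht.1
    have ht2 : t < 2 * Real.pi := lt_of_le_of_lt ht.2 hb2
    have hc : Real.cos t < 1 := cos_lt_one_of_Ioo h0t ht2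
    have hne : 2 - 2 * Real.cos t ≠ 0 := by linarith
    have : ContinuousAt (fun t : ℝ ↦ 2 - 2 * Real.cos t) t := by fun_prop
    exact continuousAt_const.mul (this.log hne)
  have key : ∀ y ∈ Set.Icc a b, Cl2 y = Cl2 a + ∫ t in a..y, L t := by
    intro y hy
    have hay : a ≤ y := hy.1
    have hyb : y ≤ b := hy.2
    have hsub : ∀ t ∈ Set.uIoc a y, t ∈ Set.Ioo 0 (2 * Real.pi) := by
      intro t ht
      rw [Set.uIoc_of_le hay] at ht
      exact ⟨lt_trans ha0 ht.1, lt_of_le_of_lt ht.2 (lt_of_le_of_lt hyb hb2)⟩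
    have hsub' : ∀ t ∈ Set.uIcc a y, t ∈ Set.Ioo 0 (2 * Real.pi) := by
      intro t ht
      rw [Set.uIcc_of_le hay] at ht
      exact ⟨lt_of_lt_of_le ha0 ht.1, lt_of_le_of_lt ht.2 (lt_of_le_of_lt hyb hb2)⟩
    set F : ℕ → ℝ → ℝ :=
      fun n t ↦ ∑ k ∈ Finset.range n, Real.cos (((k : ℝ) + 1) * t) / ((k : ℝ) + 1) with hF
    have hFcont : ∀ n, Continuous (F n) := by
      intro n
      rw [hF]
      exact continuous_finset_sum _ fun k _ ↦ by fun_prop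
    have T1 : Filter.Tendsto (fun n ↦ ∫ t in a..y, F n t) Filter.atTop
        (𝓝 (∫ t in a..y, L t)) := by
      apply intervalIntegral.tendsto_integral_filter_of_dominated_convergence
        (bound := fun t ↦ 2 / Real.sqrt (2 - 2 * Real.cos t))
      · exact Filter.Eventually.of_forall fun n ↦
          ((hFcont n).continuousOn).aestronglyMeasurable measurableSet_uIoc
      · refine Filter.Eventually.of_forall fun n ↦ MeasureTheory.ae_of_all _ fun t ht ↦ ?_
        have h := hsub t ht
        rw [Real.norm_eq_abs]
        exact partial_cos_bound (cos_lt_one_of_Ioo h.1 h.2) n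
      · apply ContinuousOn.intervalIntegrable
        intro t ht
        have h := hsub' t ht
        have hc : Real.cos t < 1 := cos_lt_one_of_Ioo h.1 h.2
        have hpos : 0 < 2 - 2 * Real.cos t := by linarith
        apply ContinuousAt.continuousWithinAt
        apply ContinuousAt.div continuousAt_const
        · exact (Real.continuous_sqrt.continuousAt).comp (by fun_prop)
        · positivity
      · refine MeasureTheory.ae_of_all _ fun t ht ↦ ?_
        have h := hsub t ht
        exact tendsto_partial_cos h.1 h.2
    have T2 : ∀ n, ∫ t in a..y, F n t = ∑ k ∈ Finset.range n,
        (Real.sin (((k : ℝ) + 1) * y) / ((k : ℝ) + 1) ^ 2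
          - Real.sin (((k : ℝ) + 1) * a) / ((k : ℝ) + 1) ^ 2) := by
      intro n
      rw [hF]
      rw [intervalIntegral.integral_finset_sum
        (fun k _ ↦ Continuous.intervalIntegrable (by fun_prop) _ _)]
      refine Finset.sum_congr rfl fun k _ ↦ ?_
      have hc0 : ((k : ℝ) + 1) ≠ 0 := by positivity
      have hder : ∀ t ∈ Set.uIcc a y,
          HasDerivAt (fun u ↦ Real.sin (((k : ℝ) + 1) * u) / ((k : ℝ) + 1) ^ 2)
            (Real.cos (((k : ℝ) + 1) * t) / ((k : ℝ) + 1)) t := by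
        intro t _
        have h1 : HasDerivAt (fun u : ℝ ↦ ((k : ℝ) + 1) * u) (((k : ℝ) + 1) * 1) t :=
          (hasDerivAt_id t).const_mul _
        have h2 := (h1.sin).div_const (((k : ℝ) + 1) ^ 2)
        refine h2.congr_deriv ?_
        rw [div_eq_div_iff (by positivity) hc0]
        ring
      rw [intervalIntegral.integral_eq_sub_of_hasDerivAt hder
        (Continuous.intervalIntegrable (by fun_prop) _ _)]
    have T3 : Filter.Tendsto (fun n ↦ ∫ t in a..y, F n t) Filter.atTop
        (𝓝 (Cl2 y - Cl2 a)) := by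
      simp_rw [T2, Finset.sum_sub_distrib]
      exact (tendsto_partial_sin y).sub (tendsto_partial_sin a)
    have h := tendsto_nhds_unique T1 T3
    linarith [h]
  have hIccsub : Set.Icc a x ⊆ Set.Icc a b := Set.Icc_subset_Icc le_rfl hxb.le
  have hLint : IntervalIntegrable L MeasureTheory.volume a x := by
    apply ContinuousOn.intervalIntegrable
    intro t ht
    rw [Set.uIcc_of_le hax.le] at ht
    exact (hLcont t (hIccsub ht)).continuousWithinAt
  have hmeas : StronglyMeasurableAtFilter L (𝓝 x) :=
    ⟨Set.Ioo a b, Ioo_mem_nhds hax hxb,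
      (continuousOn_of_forall_continuousAt fun t ht ↦ hLcont t ⟨ht.1.le, ht.2.le⟩).aestronglyMeasurable
        measurableSet_Ioo⟩
  have hder := (intervalIntegral.integral_hasDerivAt_right hLint hmeas
    (hLcont x ⟨hax.le, hxb.le⟩)).const_add (Cl2 a)
  have heq : Cl2 =ᶠ[𝓝 x] fun y ↦ Cl2 a + ∫ t in a..y, L t :=
    Filter.eventuallyEq_of_mem (Ioo_mem_nhds hax hxb) fun y hy ↦ key y ⟨hy.1.le, hy.2.le⟩
  exact hder.congr_of_eventuallyEq heq
end
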